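/- arXiv:2509.11013 — 6 statements merged into one kernel-verified Lean document; each statement's English description precedes it below -/
import Mathlib

section
/- Let (Ω, ℱ, P) be a probability space, 𝒢 ⊆ ℱ a sub-σ-algebra, and Z : Ω → ℝ a P-integrable random variable. Let C be a set of 𝒢-measurable real-valued functions on Ω such that Z·g is P-integrable for every g ∈ C, and such that C is closed under 𝒢-measurable gluing: for all g, g′ ∈ C and every A ∈ 𝒢, the function 1_A·g + 1_{Aᶜ}·g′ belongs to C. Let g° ∈ C satisfy E[Z·(g − g°)] ≥ 0 for every g ∈ C. Then for every g ∈ C, E[Z ∣ 𝒢]·(g − g°) ≥ 0 P-almost surely. -/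
open MeasureTheory
open scoped Classical

/-!
Gluing `g` on a `𝒢`-set `s` with `g°` off `s` gives an admissible strategy, whose stationarity
inequality reads `∫_s Z (g - g°) ≥ 0`. Since `g - g°` is `𝒢`-measurable it can be pulled out of
the conditional expectation, so `∫_s E[Z|𝒢] (g - g°) ≥ 0` for every `s ∈ 𝒢`; a `𝒢`-measurable
integrand with nonnegative integral over every `𝒢`-set is almost surely nonnegative.
-/

section

variable {Ω : Type*} {m m0 : MeasurableSpace Ω} {μ : Measure Ω}

theorem ae_nonneg_of_forall_setIntegral_nonneg_of_stronglyMeasurable (hm : m ≤ m0)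
    {f : Ω → ℝ} (hf : StronglyMeasurable[m] f) (hfi : Integrable f μ)
    (hf_nonneg : ∀ s, MeasurableSet[m] s → 0 ≤ ∫ x in s, f x ∂μ) : 0 ≤ᵐ[μ] f := by
  refine ae_le_of_ae_le_trim (hm := hm) ?_
  refine ae_nonneg_of_forall_setIntegral_nonneg (hfi.trim hm hf) fun s hs _ => ?_
  rw [← setIntegral_trim hm hf hs]
  exact hf_nonneg s hs

theorem setIntegral_condExp_mul_of_stronglyMeasurable (hm : m ≤ m0) [SigmaFinite (μ.trim hm)]
    {Z f : Ω → ℝ} (hf : StronglyMeasurable[m] f) (hZf : Integrable (Z * f) μ)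
    (hZ : Integrable Z μ) {s : Set Ω} (hs : MeasurableSet[m] s) :
    ∫ x in s, (μ[Z|m]) x * f x ∂μ = ∫ x in s, Z x * f x ∂μ := by
  refine (setIntegral_congr_ae (hm s hs) ?_).trans (setIntegral_condExp hm hZf hs)
  filter_upwards [condExp_mul_of_stronglyMeasurable_right hf hZf hZ] with x hx _
  exact hx.symm

theorem integral_mul_ite_sub_eq_setIntegral {s : Set Ω} (hs : MeasurableSet s)
    (Z g g' : Ω → ℝ) :
    ∫ x, Z x * ((if x ∈ s then g x else g' x) - g' x) ∂μ = ∫ x in s, Z x * (g x - g' x) ∂μ := by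
  rw [← integral_indicator hs]
  congr 1
  funext x
  by_cases hx : x ∈ s <;> simp [hx]

end

/-- Localization of a stationary condition: if `C` is a decomposable class of
`𝒢`-measurable functions and `E[Z·(g − g°)] ≥ 0` for all `g ∈ C`, then
`E[Z|𝒢]·(g − g°) ≥ 0` almost surely, for every `g ∈ C`. -/
theorem stmt_5 {Ω : Type*} {m0 : MeasurableSpace Ω} (P : Measure Ω) [IsProbabilityMeasure P]
    (G : MeasurableSpace Ω) (hG : G ≤ m0)
    (Z : Ω → ℝ) (hZ : Integrable Z P)
    (C : Set (Ω → ℝ))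
    (hCmeas : ∀ g ∈ C, StronglyMeasurable[G] g)
    (hCint : ∀ g ∈ C, Integrable (fun ω => Z ω * g ω) P)
    (hCglue : ∀ g ∈ C, ∀ g' ∈ C, ∀ A : Set Ω, MeasurableSet[G] A →
      (fun ω => if ω ∈ A then g ω else g' ω) ∈ C)
    (go : Ω → ℝ) (hgo : go ∈ C)
    (hstat : ∀ g ∈ C, 0 ≤ ∫ ω, Z ω * (g ω - go ω) ∂P) :
    ∀ g ∈ C, ∀ᵐ ω ∂P, 0 ≤ (P[Z|G]) ω * (g ω - go ω) := by
  intro g hg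
  have hf : StronglyMeasurable[G] (fun ω => g ω - go ω) := (hCmeas g hg).sub (hCmeas go hgo)
  have hZf : Integrable (fun ω => Z ω * (g ω - go ω)) P := by
    simpa only [Pi.sub_def, mul_sub] using (hCint g hg).sub (hCint go hgo)
  refine ae_nonneg_of_forall_setIntegral_nonneg_of_stronglyMeasurable hG
    (stronglyMeasurable_condExp.mul hf)
    (integrable_condExp.congr (condExp_mul_of_stronglyMeasurable_right hf hZf hZ))
    fun s hs => ?_
  rw [setIntegral_condExp_mul_of_stronglyMeasurable hG hf hZf hZ hs,
    ← integral_mul_ite_sub_eq_setIntegral (hG s hs)]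
  exact hstat _ (hCglue g hg go hgo s hs)
end

section
/- Let K ∈ ℕ and for each k ∈ {1, …, K} let E_k be a real normed vector space and U_k ⊆ E_k a convex set; let E := E_1 × ⋯ × E_K with the product norm and S := U_1 × ⋯ × U_K ⊆ E. Let J : E → ℝ be convex on S and Fréchet-differentiable at a point γ° = (γ°_1, …, γ°_K) ∈ S with derivative D (a continuous linear functional on E). Suppose that for every k and every x ∈ U_k, D(e_k(x − γ°_k)) ≥ 0, where e_k : E_k → E places its argument in the k-th coordinate and zero in all other coordinates. Then J(γ°) ≤ J(γ) for every γ ∈ S; that is, person-by-person stationarity together with convexity of J implies global (team) optimality. -/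
/-!
For `γ ∈ S`, convexity of `J` along the segment from `γ°` to `γ` gives the gradient inequality
`D (γ - γ°) ≤ J γ - J γ°`. Since `S` is a product, `γ - γ°` is the sum of its single-coordinate
components `e_k (γ_k - γ°_k)`, each an admissible direction, so `D (γ - γ°) ≥ 0`.
-/

open AffineMap in
theorem ConvexOn.map_sub_le_sub_of_hasFDerivAt {E : Type*} [NormedAddCommGroup E]
    [NormedSpace ℝ E] {s : Set E} {f : E → ℝ} {f' : E →L[ℝ] ℝ} {x y : E}
    (hf : ConvexOn ℝ s f) (hx : x ∈ s) (hy : y ∈ s) (hf' : HasFDerivAt f f' x) :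
    f' (y - x) ≤ f y - f x := by
  have hline : ConvexOn ℝ (lineMap (k := ℝ) x y ⁻¹' s) (f ∘ lineMap x y) := hf.comp_affineMap _
  have hderiv : HasDerivAt (f ∘ lineMap (k := ℝ) x y) (f' (y - x)) 0 := by
    rw [← lineMap_apply_zero (k := ℝ) x y] at hf'
    exact hf'.comp_hasDerivAt 0 hasDerivAt_lineMap
  simpa [slope_def_field] using
    hline.le_slope_of_hasDerivAt (by simpa) (by simpa) zero_lt_one hderiv

theorem map_nonneg_of_forall_map_single_nonneg {ι F N : Type*} [Fintype ι] [DecidableEq ι]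
    {M : ι → Type*} [∀ i, AddCommMonoid (M i)] [AddCommMonoid N] [PartialOrder N]
    [IsOrderedAddMonoid N] [FunLike F (∀ i, M i) N] [AddMonoidHomClass F (∀ i, M i) N]
    (D : F) (v : ∀ i, M i) (hv : ∀ i, 0 ≤ D (Pi.single i (v i))) : 0 ≤ D v := by
  rw [← Finset.univ_sum_single v, map_sum]
  exact Finset.sum_nonneg fun i _ ↦ hv i

theorem stmt_6_general {K : ℕ} {E : Fin K → Type*} [∀ k, NormedAddCommGroup (E k)]
    [∀ k, NormedSpace ℝ (E k)] (U : ∀ k, Set (E k))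
    (S : Set (∀ k, E k)) (hS : S = Set.univ.pi U)
    (J : (∀ k, E k) → ℝ) (hJconv : ConvexOn ℝ S J)
    (γo : ∀ k, E k) (hγo : γo ∈ S)
    (D : (∀ k, E k) →L[ℝ] ℝ) (hdiff : HasFDerivAt J D γo)
    (hstat : ∀ k, ∀ x ∈ U k, 0 ≤ D (Pi.single k (x - γo k))) :
    ∀ γ ∈ S, J γo ≤ J γ := by
  intro γ hγ
  have hγU : ∀ k, γ k ∈ U k := fun k ↦ (hS ▸ hγ) k (Set.mem_univ k)
  have hD : 0 ≤ D (γ - γo) :=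
    map_nonneg_of_forall_map_single_nonneg D _ fun k ↦ hstat k (γ k) (hγU k)
  linarith [hJconv.map_sub_le_sub_of_hasFDerivAt hγo hγ hdiff]

/-- Person-by-person stationarity plus convexity of the payoff implies global (team)
optimality: if `J` is convex on `S = U₁ × ⋯ × U_K`, Fréchet-differentiable at `γ° ∈ S`
with derivative `D`, and `D` is nonnegative in every admissible single-coordinate
direction, then `γ°` is a global minimizer of `J` on `S`. -/
theorem stmt_6 {K : ℕ} {E : Fin K → Type*} [∀ k, NormedAddCommGroup (E k)]
    [∀ k, NormedSpace ℝ (E k)] (U : ∀ k, Set (E k)) (hU : ∀ k, Convex ℝ (U k))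
    (S : Set (∀ k, E k)) (hS : S = Set.univ.pi U)
    (J : (∀ k, E k) → ℝ) (hJconv : ConvexOn ℝ S J)
    (γo : ∀ k, E k) (hγo : γo ∈ S)
    (D : (∀ k, E k) →L[ℝ] ℝ) (hdiff : HasFDerivAt J D γo)
    (hstat : ∀ k, ∀ x ∈ U k, 0 ≤ D (Pi.single k (x - γo k))) :
    ∀ γ ∈ S, J γo ≤ J γ :=
  stmt_6_general U S hS J hJconv γo hγo D hdiff hstat
end

section
/- Let σ > 0, let μ be a probability measure on ℝ, and let g : ℝ → ℝ be Borel measurable with ∫ g(ξ)² dμ(ξ) < ∞. On the probability space (ℝ², Borel, μ ⊗ N(0, σ²)) define X(x, v) := x, V(x, v) := v and Y := g(X) + V. Define h : ℝ → ℝ by h(y) := [∫ g(ξ)·exp(−(y − g(ξ))²/(2σ²)) dμ(ξ)] / [∫ exp(−(y − g(ξ))²/(2σ²)) dμ(ξ)]. Then h(Y) is a version of the conditional expectation of g(X) given the σ-algebra generated by Y; that is, E[g(X) ∣ σ(Y)] = h(Y) almost surely. -/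
/-!
The shear `(x, v) ↦ (x, g x + v)` carries `μ ⊗ ρ(v) dv` to the measure with density
`ρ(y - g x)` with respect to `μ ⊗ dy`. By Fubini, both `∫_{Y ∈ t} f(X)` and
`∫_{Y ∈ t} h(Y)` then equal `∫_t ∫ f(x) ρ(y - g x) dμ(x) dy`, which characterises `h(Y)`
as `E[f(X) | Y]`.
For Gaussian noise the normalising constant of the density cancels in `h`.
-/

open MeasureTheory ProbabilityTheory
open scoped ENNReal NNReal

variable {α : Type*} [MeasurableSpace α] {μ : Measure α} {f g : α → ℝ}

theorem map_shear_prod_withDensity [SFinite μ] (hg : Measurable g) {ρ : ℝ → ℝ≥0∞}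
    (hρ : Measurable ρ) :
    (μ.prod (volume.withDensity ρ)).map (fun p => (p.1, g p.1 + p.2))
      = (μ.prod volume).withDensity (fun q => ρ (q.2 - g q.1)) := by
  have hT : Measurable (fun p : α × ℝ => (p.1, g p.1 + p.2)) := by fun_prop
  have hw : Measurable (fun q : α × ℝ => ρ (q.2 - g q.1)) := by fun_prop
  ext s hs
  rw [Measure.map_apply hT hs, Measure.prod_apply (hT hs), withDensity_apply _ hs,
    ← lintegral_indicator hs, lintegral_prod _ (hw.indicator hs).aemeasurable]
  refine lintegral_congr fun x => ?_
  have hsx := measurable_prodMk_left (x := x) (hT hs)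
  rw [withDensity_apply _ hsx, ← lintegral_indicator hsx,
    ← lintegral_add_left_eq_self (fun y => s.indicator _ (x, y)) (g x)]
  refine lintegral_congr fun v => ?_
  simp only [Set.indicator, add_sub_cancel_left]
  rfl

variable {ρ : ℝ → ℝ}

theorem integrable_comp_shear_iff [SFinite μ] (hg : Measurable g) (hρm : Measurable ρ)
    (hρ0 : 0 ≤ ρ) {F : α × ℝ → ℝ} (hF : Measurable F) :
    Integrable (fun p => F (p.1, g p.1 + p.2))
        (μ.prod (volume.withDensity fun y => ENNReal.ofReal (ρ y)))
      ↔ Integrable (fun q => F q * ρ (q.2 - g q.1)) (μ.prod volume) := by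
  rw [← Function.comp_def F, ← integrable_map_measure hF.aestronglyMeasurable (by fun_prop),
    map_shear_prod_withDensity hg hρm.ennreal_ofReal,
    integrable_withDensity_iff (by fun_prop) (ae_of_all _ fun _ => ENNReal.ofReal_lt_top)]
  simp only [ENNReal.toReal_ofReal (hρ0 _)]

theorem setIntegral_comp_shear_preimage [SFinite μ] (hg : Measurable g) (hρm : Measurable ρ)
    (hρ0 : 0 ≤ ρ) {F : α × ℝ → ℝ} (hF : Measurable F)
    (hFi : Integrable (fun q => F q * ρ (q.2 - g q.1)) (μ.prod volume))
    {t : Set ℝ} (ht : MeasurableSet t) :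
    ∫ p in (fun p => g p.1 + p.2) ⁻¹' t, F (p.1, g p.1 + p.2)
        ∂(μ.prod (volume.withDensity fun y => ENNReal.ofReal (ρ y)))
      = ∫ y in t, ∫ x, F (x, y) * ρ (y - g x) ∂μ := by
  have hst : MeasurableSet (Set.univ ×ˢ t : Set (α × ℝ)) := MeasurableSet.univ.prod ht
  have hpre : (fun p : α × ℝ => g p.1 + p.2) ⁻¹' t
      = (fun p => (p.1, g p.1 + p.2)) ⁻¹' (Set.univ ×ˢ t) := by ext; simp
  rw [hpre, ← setIntegral_map hst hF.aestronglyMeasurable (by fun_prop),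
    map_shear_prod_withDensity hg hρm.ennreal_ofReal,
    setIntegral_withDensity_eq_setIntegral_toReal_smul (by fun_prop)
      (ae_of_all _ fun _ => ENNReal.ofReal_lt_top) _ hst]
  simp only [ENNReal.toReal_ofReal (hρ0 _), smul_eq_mul, mul_comm (ρ _)]
  have hFt := hFi.restrict (s := Set.univ ×ˢ t)
  rw [← Measure.prod_restrict, Measure.restrict_univ] at hFt ⊢
  exact integral_prod_symm _ hFt

theorem integrable_mul_shifted_density [SFinite μ] (hg : Measurable g) (hρm : Measurable ρ)
    (hρ : Integrable ρ) {F : α → ℝ} (hF : Integrable F μ) :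
    Integrable (fun q : α × ℝ => F q.1 * ρ (q.2 - g q.1)) (μ.prod volume) := by
  refine (integrable_prod_iff (f := fun q : α × ℝ => F q.1 * ρ (q.2 - g q.1)) ?_).2
    ⟨ae_of_all _ fun x => (hρ.comp_sub_right (g x)).const_mul (F x), ?_⟩
  · exact hF.1.comp_fst.mul
      (by fun_prop : Measurable fun q : α × ℝ => ρ (q.2 - g q.1)).aestronglyMeasurable
  simp_rw [norm_mul, integral_const_mul, integral_sub_right_eq_self (fun y => ‖ρ y‖) (g _)]
  exact hF.norm.mul_const _

theorem ae_integrable_shifted_density [IsFiniteMeasure μ] (hg : Measurable g)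
    (hρm : Measurable ρ) (hρ : Integrable ρ) :
    ∀ᵐ y, Integrable (fun x => ρ (y - g x)) μ := by
  simpa using
    (integrable_mul_shifted_density hg hρm hρ (integrable_const (1 : ℝ))).prod_left_ae

/-- `E[f(X) | g(X) + V = y]` for `X ∼ μ` and independent noise `V` with density `ρ`. -/
noncomputable def posteriorMean (μ : Measure α) (ρ : ℝ → ℝ) (f g : α → ℝ) (y : ℝ) :
    ℝ :=
  (∫ x, f x * ρ (y - g x) ∂μ) / ∫ x, ρ (y - g x) ∂μ

theorem measurable_posteriorMean [SFinite μ] (hf : Measurable f) (hg : Measurable g)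
    (hρm : Measurable ρ) : Measurable (posteriorMean μ ρ f g) := by
  have hK : StronglyMeasurable fun q : ℝ × α => ρ (q.1 - g q.2) :=
    (by fun_prop : Measurable fun q : ℝ × α => ρ (q.1 - g q.2)).stronglyMeasurable
  exact ((hf.comp measurable_snd).stronglyMeasurable.mul hK).integral_prod_right'.measurable.div
    hK.integral_prod_right'.measurable

theorem posteriorMean_mul_integral (hρ0 : 0 ≤ ρ) {y : ℝ}
    (hy : Integrable (fun x => ρ (y - g x)) μ) :
    posteriorMean μ ρ f g y * ∫ x, ρ (y - g x) ∂μ = ∫ x, f x * ρ (y - g x) ∂μ := by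
  -- With zero evidence `ρ (y - g ·)` vanishes `μ`-a.e., so the junk value `_ / 0 = 0`
  -- is harmless.
  by_cases hD : ∫ x, ρ (y - g x) ∂μ = 0
  · have hzero : (fun x => ρ (y - g x)) =ᵐ[μ] 0 :=
      (integral_eq_zero_iff_of_nonneg (f := fun x => ρ (y - g x)) (fun _ => hρ0 _) hy).1 hD
    rw [hD, mul_zero, integral_eq_zero_of_ae]
    filter_upwards [hzero] with x hx
    simp [hx]
  · exact div_mul_cancel₀ _ hD

theorem integrable_posteriorMean_mul [IsFiniteMeasure μ] (hfm : Measurable f)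
    (hf : Integrable f μ) (hg : Measurable g) (hρm : Measurable ρ) (hρ0 : 0 ≤ ρ)
    (hρ : Integrable ρ) :
    Integrable (fun q : α × ℝ => posteriorMean μ ρ f g q.2 * ρ (q.2 - g q.1))
      (μ.prod volume) := by
  have hh := measurable_posteriorMean (μ := μ) hfm hg hρm
  have hevid := ae_integrable_shifted_density (μ := μ) hg hρm hρ
  have hbound := (integrable_mul_shifted_density hg hρm hρ hf.abs).integral_prod_right
  refine (integrable_prod_iff' (by fun_prop)).2
    ⟨hevid.mono fun y hy => hy.const_mul (posteriorMean μ ρ f g y), hbound.mono ?_ ?_⟩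
  · have hm : Measurable fun q : ℝ × α =>
        ‖posteriorMean μ ρ f g q.1 * ρ (q.1 - g q.2)‖ := by fun_prop
    exact hm.stronglyMeasurable.integral_prod_right'.aestronglyMeasurable
  filter_upwards [hevid] with y hy
  calc ‖∫ x, ‖posteriorMean μ ρ f g y * ρ (y - g x)‖ ∂μ‖
      = |posteriorMean μ ρ f g y * ∫ x, ρ (y - g x) ∂μ| := by
        simp_rw [norm_mul, Real.norm_eq_abs, abs_of_nonneg (hρ0 _), integral_const_mul]
        rw [abs_mul, abs_mul, abs_abs]
    _ = |∫ x, f x * ρ (y - g x) ∂μ| := by rw [posteriorMean_mul_integral hρ0 hy]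
    _ ≤ ∫ x, |f x * ρ (y - g x)| ∂μ := abs_integral_le_integral_abs
    _ ≤ ‖∫ x, |f x| * ρ (y - g x) ∂μ‖ := by
        simp_rw [abs_mul, abs_of_nonneg (hρ0 _)]
        exact le_abs_self _

theorem condExp_fst_ae_eq_posteriorMean [IsFiniteMeasure μ] (hfm : Measurable f)
    (hf : Integrable f μ) (hg : Measurable g) (hρm : Measurable ρ) (hρ0 : 0 ≤ ρ)
    (hρ : Integrable ρ) :
    (μ.prod (volume.withDensity fun y => ENNReal.ofReal (ρ y)))[fun p => f p.1 |
        MeasurableSpace.comap (fun p => g p.1 + p.2) inferInstance]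
      =ᵐ[μ.prod (volume.withDensity fun y => ENNReal.ofReal (ρ y))]
        fun p => posteriorMean μ ρ f g (g p.1 + p.2) := by
  have := isFiniteMeasure_withDensity_ofReal hρ.2
  have hY : Measurable fun p : α × ℝ => g p.1 + p.2 := by fun_prop
  have hh := measurable_posteriorMean (μ := μ) hfm hg hρm
  have hhi := integrable_posteriorMean_mul hfm hf hg hρm hρ0 hρ
  refine (ae_eq_condExp_of_forall_setIntegral_eq hY.comap_le (hf.comp_fst _)
    (fun s _ _ => ((integrable_comp_shear_iff hg hρm hρ0
      (F := fun q => posteriorMean μ ρ f g q.2) (hh.comp measurable_snd)).2 hhi).integrableOn) ?_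
    (hh.comp (comap_measurable _)).aestronglyMeasurable).symm
  rintro _ ⟨t, ht, rfl⟩ -
  rw [setIntegral_comp_shear_preimage hg hρm hρ0 (F := fun q => posteriorMean μ ρ f g q.2)
      (hh.comp measurable_snd) hhi ht,
    setIntegral_comp_shear_preimage hg hρm hρ0 (F := fun q => f q.1) (hfm.comp measurable_fst)
      (integrable_mul_shifted_density hg hρm hρ hf) ht]
  refine integral_congr_ae (ae_restrict_of_ae ?_)
  filter_upwards [ae_integrable_shifted_density (μ := μ) hg hρm hρ] with y hy
  rw [integral_const_mul, posteriorMean_mul_integral hρ0 hy]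

theorem posteriorMean_gaussianPDFReal {v : ℝ≥0} (hv : v ≠ 0) (y : ℝ) :
    posteriorMean μ (gaussianPDFReal 0 v) f g y
      = (∫ x, f x * Real.exp (-(y - g x) ^ 2 / (2 * v)) ∂μ)
        / ∫ x, Real.exp (-(y - g x) ^ 2 / (2 * v)) ∂μ := by
  simp only [posteriorMean, gaussianPDFReal, sub_zero, mul_left_comm (f _), integral_const_mul]
  exact mul_div_mul_left _ _ (inv_ne_zero (Real.sqrt_ne_zero'.2 (by positivity)))

/-- Bayes formula for the Witsenhausen counterexample: with `X ∼ μ`, `V ∼ N(0,σ²)`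
independent and `Y = g(X) + V`, the function
`h(y) = (∫ g(ξ) exp(−(y−g(ξ))²/(2σ²)) dμ(ξ)) / (∫ exp(−(y−g(ξ))²/(2σ²)) dμ(ξ))`
composed with `Y` is a version of `E[g(X) | σ(Y)]`. -/
theorem stmt_11 (σ : ℝ) (hσ : 0 < σ) (μ : Measure ℝ) [IsProbabilityMeasure μ]
    (g : ℝ → ℝ) (hg : Measurable g) (hg2 : Integrable (fun ξ => g ξ ^ 2) μ)
    (P : Measure (ℝ × ℝ)) (hP : P = μ.prod (gaussianReal 0 ⟨σ ^ 2, sq_nonneg σ⟩))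
    (X : ℝ × ℝ → ℝ) (hX : ∀ p, X p = p.1)
    (Y : ℝ × ℝ → ℝ) (hY : ∀ p, Y p = g p.1 + p.2)
    (h : ℝ → ℝ)
    (hh : ∀ y, h y = (∫ ξ, g ξ * Real.exp (-(y - g ξ) ^ 2 / (2 * σ ^ 2)) ∂μ)
        / (∫ ξ, Real.exp (-(y - g ξ) ^ 2 / (2 * σ ^ 2)) ∂μ)) :
    P[fun p => g (X p)|MeasurableSpace.comap Y (inferInstance : MeasurableSpace ℝ)]
      =ᵐ[P] fun p => h (Y p) := by
  obtain rfl : X = Prod.fst := funext hX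
  obtain rfl : Y = fun p => g p.1 + p.2 := funext hY
  have hv : (⟨σ ^ 2, sq_nonneg σ⟩ : ℝ≥0) ≠ 0 := by
    simpa [← NNReal.coe_ne_zero] using hσ.ne'
  obtain rfl : h = posteriorMean μ (gaussianPDFReal 0 ⟨σ ^ 2, sq_nonneg σ⟩) g g :=
    funext fun y => (hh y).trans (posteriorMean_gaussianPDFReal hv y).symm
  have hg1 : Integrable g μ :=
    ((memLp_two_iff_integrable_sq hg.aestronglyMeasurable).2 hg2).integrable one_le_two
  rw [hP, gaussianReal_of_var_ne_zero 0 hv]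
  exact condExp_fst_ae_eq_posteriorMean hg hg1 hg (measurable_gaussianPDFReal 0 _)
    (fun _ => gaussianPDFReal_nonneg 0 _ _) (integrable_gaussianPDFReal 0 _)
end

section
/- Let σ > 0, let μ be a probability measure on ℝ, and let g : ℝ → ℝ be Borel measurable with ∫ g(ξ)² dμ(ξ) < ∞. On the probability space (ℝ², Borel, μ ⊗ N(0, σ²)) define X(x, v) := x, V(x, v) := v and Y := g(X) + V. Suppose γ₂° : ℝ → ℝ is Borel measurable with E[(γ₂°(Y))²] < ∞ and minimizes the second-stage cost for the fixed first-stage strategy g: for every Borel measurable γ₂ : ℝ → ℝ with E[(γ₂(Y))²] < ∞, E[(g(X) − γ₂°(Y))²] ≤ E[(g(X) − γ₂(Y))²]. Then γ₂°(y) = h(y) for P_Y-almost every y, where P_Y is the law of Y and h(y) := [∫ g(ξ)·exp(−(y − g(ξ))²/(2σ²)) dμ(ξ)] / [∫ exp(−(y − g(ξ))²/(2σ²)) dμ(ξ)]. -/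
/-! The map `(x, v) ↦ (x, g x + v)` sends `μ ⊗ N(0, σ²)` to the measure with density
`ρ x y = φ(y − g x)` over `μ ⊗ Lebesgue`, where `φ` is the centred Gaussian density. Since the
constant of `φ` cancels, `h y` is the `ρ(·, y)`-weighted mean of `g`, so `g(X) − h(Y)` is
orthogonal to every square-integrable function of `Y`, and the fibrewise variance inequality
`h(y)² ∫ ρ(·, y) dμ ≤ ∫ g² ρ(·, y) dμ` makes `h(Y)` square-integrable. Pythagoras then gives
`E[(g X − γ Y)²] = E[(g X − h Y)²] + E[(h Y − γ Y)²]`, so the minimizer `γ₂°` equals `h` on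
the law of `Y`. -/

open MeasureTheory ProbabilityTheory

open scoped ENNReal NNReal

section TranslatedNoise

variable {α G : Type*} [MeasurableSpace α] [MeasurableSpace G] [AddCommGroup G]
  [MeasurableAdd₂ G] [MeasurableSub₂ G]

theorem map_prod_withDensity_add_eq_withDensity (μ : Measure α) [SFinite μ] (ν : Measure G)
    [SFinite ν] [ν.IsAddLeftInvariant] {f : α → G} (hf : Measurable f) {p : G → ℝ≥0∞}
    (hp : Measurable p) :
    (μ.prod (ν.withDensity p)).map (fun q => (q.1, f q.1 + q.2))
      = (μ.prod ν).withDensity (fun q => p (q.2 - f q.1)) := by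
  refine Measure.ext_of_lintegral _ fun φ hφ => ?_
  rw [lintegral_map hφ (by fun_prop), lintegral_prod _ (by fun_prop),
    lintegral_withDensity_eq_lintegral_mul _ (by fun_prop) hφ, lintegral_prod _ (by fun_prop)]
  refine lintegral_congr fun x => ?_
  rw [lintegral_withDensity_eq_lintegral_mul _ hp (by fun_prop)]
  simp only [Pi.mul_apply]
  rw [← lintegral_add_left_eq_self (fun y => p (y - f x) * φ (x, y)) (f x)]
  simp only [add_sub_cancel_left]

end TranslatedNoise

section BayesMean

variable {α β : Type*} [MeasurableSpace α]

noncomputable def bayesMean (μ : Measure α) (ρ : α → β → ℝ) (f : α → ℝ) (y : β) : ℝ :=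
  (∫ x, f x * ρ x y ∂μ) / ∫ x, ρ x y ∂μ

variable {μ : Measure α} {ρ : α → β → ℝ} {f : α → ℝ}

theorem bayesMean_const_mul {c : ℝ} (hc : c ≠ 0) :
    bayesMean μ (fun x y => c * ρ x y) f = bayesMean μ ρ f := by
  ext y
  simp only [bayesMean, mul_left_comm (f _), integral_const_mul, mul_div_mul_left _ _ hc]

theorem measurable_bayesMean [MeasurableSpace β] [SFinite μ]
    (hρ : Measurable (Function.uncurry ρ)) (hf : Measurable f) : Measurable (bayesMean μ ρ f) :=
  (((hf.comp measurable_fst).mul hρ).stronglyMeasurable.integral_prod_left').measurable.div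
    (hρ.stronglyMeasurable.integral_prod_left').measurable

section Fiber

variable {y : β} (hρ : ∀ x, 0 ≤ ρ x y) (hρi : Integrable (ρ · y) μ)
include hρ hρi

theorem integral_mul_eq_bayesMean_mul_integral :
    ∫ x, f x * ρ x y ∂μ = bayesMean μ ρ f y * ∫ x, ρ x y ∂μ := by
  by_cases hD : ∫ x, ρ x y ∂μ = 0
  -- a null denominator forces `ρ(·, y) = 0` a.e., so both sides vanish whatever `x / 0` is
  · have hρ0 : (ρ · y) =ᵐ[μ] 0 := (integral_eq_zero_iff_of_nonneg hρ hρi).1 hD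
    rw [hD, mul_zero]
    exact integral_eq_zero_of_ae (hρ0.mono fun x hx => by simp [hx])
  · exact (div_mul_cancel₀ _ hD).symm

theorem integral_sub_bayesMean_mul_eq_zero (hfρ : Integrable (fun x => f x * ρ x y) μ) :
    ∫ x, (f x - bayesMean μ ρ f y) * ρ x y ∂μ = 0 := by
  simp_rw [sub_mul]
  rw [integral_sub hfρ (hρi.const_mul _), integral_const_mul,
    integral_mul_eq_bayesMean_mul_integral hρ hρi, sub_self]

theorem bayesMean_sq_mul_integral_le (hfρ : Integrable (fun x => f x * ρ x y) μ)
    (hf2ρ : Integrable (fun x => f x ^ 2 * ρ x y) μ) :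
    bayesMean μ ρ f y ^ 2 * ∫ x, ρ x y ∂μ ≤ ∫ x, f x ^ 2 * ρ x y ∂μ := by
  set m := bayesMean μ ρ f y
  have hexpand : (fun x => (f x - m) ^ 2 * ρ x y)
      = fun x => (f x ^ 2 * ρ x y - 2 * m * (f x * ρ x y)) + m ^ 2 * ρ x y := by
    ext x; ring
  have hvar : 0 ≤ ∫ x, (f x - m) ^ 2 * ρ x y ∂μ :=
    integral_nonneg fun x => mul_nonneg (sq_nonneg _) (hρ x)
  have hcross : Integrable (fun x => f x ^ 2 * ρ x y - 2 * m * (f x * ρ x y)) μ :=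
    hf2ρ.sub (hfρ.const_mul _)
  rw [hexpand, integral_add hcross (hρi.const_mul _),
    integral_sub hf2ρ (hfρ.const_mul _), integral_const_mul, integral_const_mul,
    integral_mul_eq_bayesMean_mul_integral (f := f) hρ hρi] at hvar
  nlinarith

end Fiber

end BayesMean

section JointDensity

variable {α β : Type*} [MeasurableSpace α] [MeasurableSpace β] {μ : Measure α} [SFinite μ]
  {ν : Measure β} [SFinite ν] {ρ : α → β → ℝ} {f : α → ℝ}
  (hρm : Measurable (Function.uncurry ρ)) (hρ : ∀ x y, 0 ≤ ρ x y)
  (hρi : ∀ y, Integrable (ρ · y) μ) (hfρ : ∀ y, Integrable (fun x => f x * ρ x y) μ)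
include hρm hρ hρi hfρ

theorem integral_sub_bayesMean_mul_eq_zero_of_withDensity {ψ : β → ℝ}
    (hψ : Integrable (fun q => (f q.1 - bayesMean μ ρ f q.2) * ψ q.2)
      ((μ.prod ν).withDensity fun q => ENNReal.ofReal (ρ q.1 q.2))) :
    ∫ q, (f q.1 - bayesMean μ ρ f q.2) * ψ q.2
      ∂(μ.prod ν).withDensity (fun q => ENNReal.ofReal (ρ q.1 q.2)) = 0 := by
  have hdens : Measurable fun q : α × β => ENNReal.ofReal (ρ q.1 q.2) := hρm.ennreal_ofReal
  have hfin : ∀ᵐ q ∂μ.prod ν, ENNReal.ofReal (ρ q.1 q.2) < ∞ :=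
    ae_of_all _ fun _ => ENNReal.ofReal_lt_top
  rw [integrable_withDensity_iff_integrable_smul' hdens hfin] at hψ
  rw [integral_withDensity_eq_integral_toReal_smul hdens hfin, integral_prod_symm _ hψ]
  refine integral_eq_zero_of_ae (ae_of_all _ fun y => ?_)
  calc ∫ x, (ENNReal.ofReal (ρ x y)).toReal • ((f x - bayesMean μ ρ f y) * ψ y) ∂μ
      = ψ y * ∫ x, (f x - bayesMean μ ρ f y) * ρ x y ∂μ := by
        rw [← integral_const_mul]
        congr 1 with x
        rw [ENNReal.toReal_ofReal (hρ x y), smul_eq_mul]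
        ring
    _ = 0 := by
        rw [integral_sub_bayesMean_mul_eq_zero (hρ · y) (hρi y) (hfρ y), mul_zero]

theorem integrable_bayesMean_sq_of_withDensity (hf : Measurable f)
    (hf2ρ : ∀ y, Integrable (fun x => f x ^ 2 * ρ x y) μ)
    (hf2 : Integrable (fun q => f q.1 ^ 2)
      ((μ.prod ν).withDensity fun q => ENNReal.ofReal (ρ q.1 q.2))) :
    Integrable (fun q => bayesMean μ ρ f q.2 ^ 2)
      ((μ.prod ν).withDensity fun q => ENNReal.ofReal (ρ q.1 q.2)) := by
  have hm := measurable_bayesMean hρm hf (μ := μ)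
  have hdens : Measurable fun q : α × β => ENNReal.ofReal (ρ q.1 q.2) := hρm.ennreal_ofReal
  refine ⟨(hm.comp measurable_snd).pow_const 2 |>.aestronglyMeasurable, ?_⟩
  have hf2fin := hf2.2
  rw [hasFiniteIntegral_iff_ofReal (ae_of_all _ fun _ => sq_nonneg _)] at hf2fin ⊢
  refine lt_of_le_of_lt ?_ hf2fin
  rw [lintegral_withDensity_eq_lintegral_mul _ hdens (by fun_prop),
    lintegral_withDensity_eq_lintegral_mul _ hdens (by fun_prop),
    lintegral_prod_symm _ (by fun_prop), lintegral_prod_symm _ (by fun_prop)]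
  refine lintegral_mono fun y => ?_
  simp only [Pi.mul_apply, ← ENNReal.ofReal_mul (hρ _ _)]
  rw [← ofReal_integral_eq_lintegral_ofReal ((hρi y).mul_const _)
      (ae_of_all _ fun x => mul_nonneg (hρ x y) (sq_nonneg _)),
    ← ofReal_integral_eq_lintegral_ofReal ((hf2ρ y).congr (ae_of_all _ fun x => mul_comm _ _))
      (ae_of_all _ fun x => mul_nonneg (hρ x y) (sq_nonneg _)), integral_mul_const]
  refine ENNReal.ofReal_le_ofReal ?_
  simp_rw [mul_comm (ρ _ y), mul_comm (∫ x, ρ x y ∂μ)]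
  exact bayesMean_sq_mul_integral_le (hρ · y) (hρi y) (hfρ y) (hf2ρ y)

end JointDensity

theorem ae_eq_of_integral_sq_sub_le_of_orthogonal {Ω : Type*} [MeasurableSpace Ω]
    {P : Measure Ω} {Z U V : Ω → ℝ} (hZ : MemLp Z 2 P) (hU : MemLp U 2 P) (hV : MemLp V 2 P)
    (horth : ∫ ω, (Z ω - U ω) * (U ω - V ω) ∂P = 0)
    (hle : ∫ ω, (Z ω - V ω) ^ 2 ∂P ≤ ∫ ω, (Z ω - U ω) ^ 2 ∂P) : U =ᵐ[P] V := by
  have hZU : MemLp (fun ω => Z ω - U ω) 2 P := hZ.sub hU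
  have hUV : MemLp (fun ω => U ω - V ω) 2 P := hU.sub hV
  have hcross : Integrable (fun ω => (Z ω - U ω) * (U ω - V ω)) P := hZU.integrable_mul hUV
  have hsplit : (fun ω => (Z ω - V ω) ^ 2) = fun ω =>
      ((Z ω - U ω) ^ 2 + 2 * ((Z ω - U ω) * (U ω - V ω))) + (U ω - V ω) ^ 2 := by
    ext ω; ring
  have hpyth : ∫ ω, (Z ω - V ω) ^ 2 ∂P
      = ∫ ω, (Z ω - U ω) ^ 2 ∂P + 2 * ∫ ω, (Z ω - U ω) * (U ω - V ω) ∂P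
        + ∫ ω, (U ω - V ω) ^ 2 ∂P := by
    have hfirst : Integrable
        (fun ω => (Z ω - U ω) ^ 2 + 2 * ((Z ω - U ω) * (U ω - V ω))) P :=
      hZU.integrable_sq.add (hcross.const_mul 2)
    rw [hsplit, integral_add hfirst hUV.integrable_sq,
      integral_add hZU.integrable_sq (hcross.const_mul 2), integral_const_mul]
  have hzero : ∫ ω, (U ω - V ω) ^ 2 ∂P = 0 :=
    le_antisymm (by linarith) (integral_nonneg fun _ => sq_nonneg _)
  filter_upwards [(integral_eq_zero_iff_of_nonneg (fun _ => sq_nonneg _)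
    hUV.integrable_sq).1 hzero] with ω hω
  exact sub_eq_zero.1 (pow_eq_zero_iff two_ne_zero |>.1 hω)

section GaussianChannel

variable {α : Type*} [MeasurableSpace α] {μ : Measure α} {g : α → ℝ} {v : ℝ≥0}

theorem gaussianPDFReal_le_inv_sqrt (m : ℝ) (v : ℝ≥0) (x : ℝ) :
    gaussianPDFReal m v x ≤ (√(2 * Real.pi * v))⁻¹ :=
  mul_le_of_le_one_right (by positivity) <| Real.exp_le_one_iff.2 <|
    div_nonpos_of_nonpos_of_nonneg (neg_nonpos.2 (sq_nonneg _)) (by positivity)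

theorem MeasureTheory.Integrable.mul_gaussianPDFReal_sub {F : α → ℝ} (hF : Integrable F μ)
    (hg : Measurable g) (m : ℝ) (v : ℝ≥0) (y : ℝ) :
    Integrable (fun x => F x * gaussianPDFReal m v (y - g x)) μ :=
  hF.mul_bdd ((measurable_gaussianPDFReal m v).comp (measurable_const.sub hg)).aestronglyMeasurable
    (ae_of_all _ fun x => by
      rw [Real.norm_of_nonneg (gaussianPDFReal_nonneg _ _ _)]
      exact gaussianPDFReal_le_inv_sqrt _ _ _)

theorem integrable_gaussianPDFReal_sub [IsFiniteMeasure μ] (hg : Measurable g) (m : ℝ)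
    (v : ℝ≥0) (y : ℝ) : Integrable (fun x => gaussianPDFReal m v (y - g x)) μ := by
  simpa using (integrable_const (1 : ℝ)).mul_gaussianPDFReal_sub hg m v y

theorem map_prod_gaussianReal_add [SFinite μ] (hg : Measurable g) (hv : v ≠ 0) :
    (μ.prod (gaussianReal 0 v)).map (fun p => (p.1, g p.1 + p.2))
      = (μ.prod volume).withDensity
          fun q => ENNReal.ofReal (gaussianPDFReal 0 v (q.2 - g q.1)) := by
  rw [gaussianReal_of_var_ne_zero 0 hv]
  exact map_prod_withDensity_add_eq_withDensity μ volume hg (measurable_gaussianPDF 0 v)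

theorem integrable_comp_add_gaussian_iff [SFinite μ] (hg : Measurable g) (hv : v ≠ 0)
    {F : α × ℝ → ℝ} (hF : Measurable F) :
    Integrable (fun p => F (p.1, g p.1 + p.2)) (μ.prod (gaussianReal 0 v))
      ↔ Integrable F ((μ.prod volume).withDensity
          fun q => ENNReal.ofReal (gaussianPDFReal 0 v (q.2 - g q.1))) := by
  rw [← map_prod_gaussianReal_add hg hv]
  exact (integrable_map_measure hF.aestronglyMeasurable (by fun_prop)).symm

noncomputable def gaussianPosteriorMean (μ : Measure α) (g : α → ℝ) (v : ℝ≥0) : ℝ → ℝ :=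
  bayesMean μ (fun x y => gaussianPDFReal 0 v (y - g x)) g

theorem gaussianPosteriorMean_eq_div (hv : v ≠ 0) (y : ℝ) :
    gaussianPosteriorMean μ g v y
      = (∫ x, g x * Real.exp (-(y - g x) ^ 2 / (2 * v)) ∂μ)
        / ∫ x, Real.exp (-(y - g x) ^ 2 / (2 * v)) ∂μ := by
  have hc : √(2 * Real.pi * v) ≠ 0 := (Real.sqrt_pos.2 (by positivity)).ne'
  have hkernel : ∀ x, √(2 * Real.pi * v) * gaussianPDFReal 0 v (y - g x)
      = Real.exp (-(y - g x) ^ 2 / (2 * v)) := fun x => by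
    rw [gaussianPDFReal, sub_zero, mul_inv_cancel_left₀ hc]
  rw [gaussianPosteriorMean, ← bayesMean_const_mul hc, bayesMean]
  simp only [hkernel]

theorem measurable_gaussianPosteriorMean [SFinite μ] (hg : Measurable g) :
    Measurable (gaussianPosteriorMean μ g v) :=
  measurable_bayesMean (by fun_prop) hg

variable [IsFiniteMeasure μ] (hg : Measurable g) (hv : v ≠ 0) (hg2 : MemLp g 2 μ)
include hg hv hg2

theorem memLp_gaussianPosteriorMean_comp :
    MemLp (fun p : α × ℝ => gaussianPosteriorMean μ g v (g p.1 + p.2)) 2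
      (μ.prod (gaussianReal 0 v)) := by
  have hm := measurable_gaussianPosteriorMean hg (μ := μ) (v := v)
  refine (memLp_two_iff_integrable_sq (hm.comp (by fun_prop)).aestronglyMeasurable).2
    ((integrable_comp_add_gaussian_iff hg hv
      (F := fun q => gaussianPosteriorMean μ g v q.2 ^ 2) (by fun_prop)).2 ?_)
  refine integrable_bayesMean_sq_of_withDensity (by fun_prop)
    (fun _ _ => gaussianPDFReal_nonneg _ _ _)
    (integrable_gaussianPDFReal_sub hg 0 v)
    ((hg2.integrable one_le_two).mul_gaussianPDFReal_sub hg 0 v) hg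
    (hg2.integrable_sq.mul_gaussianPDFReal_sub hg 0 v) ?_
  exact (integrable_comp_add_gaussian_iff hg hv (by fun_prop)).1 (hg2.integrable_sq.comp_fst _)

theorem integral_sub_gaussianPosteriorMean_mul_eq_zero {ψ : ℝ → ℝ} (hψm : Measurable ψ)
    (hψ : MemLp (fun p : α × ℝ => ψ (g p.1 + p.2)) 2 (μ.prod (gaussianReal 0 v))) :
    ∫ p, (g p.1 - gaussianPosteriorMean μ g v (g p.1 + p.2)) * ψ (g p.1 + p.2)
      ∂μ.prod (gaussianReal 0 v) = 0 := by
  have hm := measurable_gaussianPosteriorMean hg (μ := μ) (v := v)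
  have hF : Measurable fun q : α × ℝ => (g q.1 - gaussianPosteriorMean μ g v q.2) * ψ q.2 := by
    fun_prop
  have hint := ((hg2.comp_fst (gaussianReal 0 v)).sub
    (memLp_gaussianPosteriorMean_comp hg hv hg2)).integrable_mul hψ
  have hzero := integral_sub_bayesMean_mul_eq_zero_of_withDensity (ν := volume) (ψ := ψ)
    (by fun_prop) (fun _ _ => gaussianPDFReal_nonneg _ _ _) (integrable_gaussianPDFReal_sub hg 0 v)
    ((hg2.integrable one_le_two).mul_gaussianPDFReal_sub hg 0 v)
    ((integrable_comp_add_gaussian_iff hg hv hF).1 hint)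
  have hT : Measurable fun p : α × ℝ => (p.1, g p.1 + p.2) := by fun_prop
  have hmap := integral_map (μ := μ.prod (gaussianReal 0 v)) hT.aemeasurable
    hF.aestronglyMeasurable
  rw [map_prod_gaussianReal_add hg hv] at hmap
  exact hmap.symm.trans hzero

end GaussianChannel

/-- Second integral equation of the Witsenhausen counterexample: if `γ₂°` minimizes the
second-stage cost `E[(g(X) − γ₂(Y))²]` among square-integrable measurable strategies, then
`γ₂°` agrees, for `P_Y`-almost every `y`, with the Bayes ratio
`h(y) = (∫ g(ξ) exp(−(y−g(ξ))²/(2σ²)) dμ(ξ)) / (∫ exp(−(y−g(ξ))²/(2σ²)) dμ(ξ))`. -/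
theorem stmt_12 (σ : ℝ) (hσ : 0 < σ) (μ : Measure ℝ) [IsProbabilityMeasure μ]
    (g : ℝ → ℝ) (hg : Measurable g) (hg2 : Integrable (fun ξ => g ξ ^ 2) μ)
    (P : Measure (ℝ × ℝ)) (hP : P = μ.prod (gaussianReal 0 ⟨σ ^ 2, sq_nonneg σ⟩))
    (X : ℝ × ℝ → ℝ) (hX : ∀ p, X p = p.1)
    (Y : ℝ × ℝ → ℝ) (hY : ∀ p, Y p = g p.1 + p.2)
    (γ₂o : ℝ → ℝ) (hγ₂o_meas : Measurable γ₂o)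
    (hγ₂o_sq : Integrable (fun p => γ₂o (Y p) ^ 2) P)
    (hmin : ∀ γ₂ : ℝ → ℝ, Measurable γ₂ → Integrable (fun p => γ₂ (Y p) ^ 2) P →
      ∫ p, (g (X p) - γ₂o (Y p)) ^ 2 ∂P ≤ ∫ p, (g (X p) - γ₂ (Y p)) ^ 2 ∂P)
    (h : ℝ → ℝ)
    (hh : ∀ y, h y = (∫ ξ, g ξ * Real.exp (-(y - g ξ) ^ 2 / (2 * σ ^ 2)) ∂μ)
        / (∫ ξ, Real.exp (-(y - g ξ) ^ 2 / (2 * σ ^ 2)) ∂μ)) :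
    ∀ᵐ y ∂(P.map Y), γ₂o y = h y := by
  obtain rfl : X = Prod.fst := funext hX
  obtain rfl : Y = fun p => g p.1 + p.2 := funext hY
  set v : ℝ≥0 := ⟨σ ^ 2, sq_nonneg σ⟩
  have hv : v ≠ 0 := fun h0 => (pow_pos hσ 2).ne' (congrArg NNReal.toReal h0)
  obtain rfl : h = gaussianPosteriorMean μ g v :=
    funext fun y => (hh y).trans (gaussianPosteriorMean_eq_div hv y).symm
  subst hP
  have hgL2 : MemLp g 2 μ := (memLp_two_iff_integrable_sq hg.aestronglyMeasurable).2 hg2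
  have hm : Measurable (gaussianPosteriorMean μ g v) := measurable_gaussianPosteriorMean hg
  have hY : Measurable fun p : ℝ × ℝ => g p.1 + p.2 := by fun_prop
  have hmY := memLp_gaussianPosteriorMean_comp hg hv hgL2
  have hγY : MemLp (fun p : ℝ × ℝ => γ₂o (g p.1 + p.2)) 2 (μ.prod (gaussianReal 0 v)) :=
    (memLp_two_iff_integrable_sq (hγ₂o_meas.comp hY).aestronglyMeasurable).2 hγ₂o_sq
  have horth := integral_sub_gaussianPosteriorMean_mul_eq_zero hg hv hgL2
    (ψ := fun y => gaussianPosteriorMean μ g v y - γ₂o y) (hm.sub hγ₂o_meas) (hmY.sub hγY)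
  have hae := ae_eq_of_integral_sq_sub_le_of_orthogonal (hgL2.comp_fst _) hmY hγY horth
    (hmin _ hm hmY.integrable_sq)
  rw [ae_map_iff hY.aemeasurable (measurableSet_eq_fun hγ₂o_meas hm)]
  exact hae.mono fun p hp => hp.symm
end

section
/- Let σ > 0 and k ∈ ℝ, let μ be a probability measure on ℝ with ∫ x² dμ(x) < ∞, let ḡ : ℝ → ℝ be Borel measurable with ∫ ḡ(x)² dμ(x) < ∞, and let γ₂ : ℝ → ℝ and δ : ℝ → ℝ be bounded Borel measurable. Write φ_σ(z) := (1/√(2πσ²)) exp(−z²/(2σ²)) and γ_σ := N(0, σ²). For t ∈ ℝ define J(t) := ∫∫ [k²·(ḡ(x) + t·δ(x) − x)² + (ḡ(x) + t·δ(x) − γ₂(ḡ(x) + t·δ(x) + v))²] dγ_σ(v) dμ(x). Then J is differentiable at t = 0 with J′(0) = ∫ δ(x)·D(x) dμ(x), where D(x) := 2k²·(ḡ(x) − x) + ∫_ℝ [((ζ − ḡ(x))/σ²)·(ḡ(x) − γ₂(ζ))² + 2·(ḡ(x) − γ₂(ζ))]·φ_σ(ζ − ḡ(x)) dζ, the inner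 integral being with respect to Lebesgue measure. -/
/-!
Put `u = ḡ(x) + t δ(x)`. Substituting `ζ = u + v` turns the inner Gaussian integral into
`h(u) = ∫ (u - γ₂ ζ)² φ_σ(ζ - u) dζ`, where `u` no longer sits inside the merely measurable `γ₂`
but only in the smooth density. Hence `h` can be differentiated under the integral sign: for
`|u - u₀| < 1` the densities `φ_σ(· - u)` are all dominated by `e^{1/(2σ²)}` times a Gaussian
profile of variance `2σ²` centred at `u₀`, which has a finite first absolute moment. This gives
`h'` with `|h'(u)| = O(1 + u²)`. A second differentiation under the integral sign, in `t`
against `μ`, is then dominated because `δ` is bounded and `x`, `ḡ` have finite second moments.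
-/

open MeasureTheory ProbabilityTheory Real
open scoped NNReal

namespace Witsenhausen

variable {v : ℝ≥0}

lemma hasDerivAt_gaussianPDFReal_mean (v : ℝ≥0) (x m : ℝ) :
    HasDerivAt (fun m => gaussianPDFReal m v x) ((x - m) / v * gaussianPDFReal m v x) m := by
  have h : HasDerivAt (fun m => -(x - m) ^ 2 / (2 * v)) (-(2 * (x - m) * -1) / (2 * v)) m := by
    simpa using (((hasDerivAt_id m).const_sub x).fun_pow 2).neg.div_const (2 * (v : ℝ))
  refine (h.exp.const_mul (√(2 * π * v))⁻¹).congr_deriv ?_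
  rcases eq_or_ne (v : ℝ) 0 with h0 | h0
  · simp [h0, gaussianPDFReal]
  · simp only [gaussianPDFReal]
    field_simp

lemma gaussianPDFReal_le_of_abs_sub_le (v : ℝ≥0) {m m₀ : ℝ} (hm : |m - m₀| ≤ 1) (x : ℝ) :
    gaussianPDFReal m v x
      ≤ (√(2 * π * v))⁻¹ * rexp (2 * (v : ℝ))⁻¹ * rexp (-(4 * (v : ℝ))⁻¹ * (x - m₀) ^ 2) := by
  have hsq : (m - m₀) ^ 2 ≤ 1 := by nlinarith [sq_abs (m - m₀), abs_nonneg (m - m₀)]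
  -- `(x - m₀)² ≤ 2 (x - m)² + 2 (m - m₀)²`
  have hx : (x - m₀) ^ 2 / 2 - 1 ≤ (x - m) ^ 2 := by nlinarith [sq_nonneg (x - m - (m - m₀))]
  have hexp : -(x - m) ^ 2 / (2 * v) ≤ (2 * (v : ℝ))⁻¹ + -(4 * (v : ℝ))⁻¹ * (x - m₀) ^ 2 := by
    have h2v : (0 : ℝ) ≤ (2 * (v : ℝ))⁻¹ := by positivity
    calc -(x - m) ^ 2 / (2 * v) = (2 * (v : ℝ))⁻¹ * -(x - m) ^ 2 := by ring
      _ ≤ (2 * (v : ℝ))⁻¹ * (1 - (x - m₀) ^ 2 / 2) := by gcongr; linarith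
      _ = (2 * (v : ℝ))⁻¹ + -(4 * (v : ℝ))⁻¹ * (x - m₀) ^ 2 := by ring
  rw [mul_assoc, ← Real.exp_add]
  exact mul_le_mul_of_nonneg_left (Real.exp_le_exp.2 hexp) (by positivity)

lemma integrable_affine_abs_mul_exp_neg_mul_sq {b : ℝ} (hb : 0 < b) (a c m : ℝ) :
    Integrable (fun x => (a * |x - m| + c) * rexp (-b * (x - m) ^ 2)) := by
  have h := ((integrable_mul_exp_neg_mul_sq hb).abs.const_mul a).add
    ((integrable_exp_neg_mul_sq hb).const_mul c)
  refine (h.comp_sub_right m).congr (Filter.Eventually.of_forall fun x => ?_)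
  simp only [Pi.add_apply, abs_mul, abs_of_pos (Real.exp_pos _)]
  ring

theorem hasDerivAt_integral_mul_gaussianPDFReal (hv : v ≠ 0) {f f' : ℝ → ℝ → ℝ} {u₀ M M' : ℝ}
    (hf_meas : ∀ u, AEStronglyMeasurable (f u)) (hf'_meas : AEStronglyMeasurable (f' u₀))
    (hf : ∀ ζ, ∀ u ∈ Metric.ball u₀ 1, HasDerivAt (f · ζ) (f' u ζ) u)
    (hfM : ∀ u ∈ Metric.ball u₀ 1, ∀ ζ, |f u ζ| ≤ M)
    (hf'M : ∀ u ∈ Metric.ball u₀ 1, ∀ ζ, |f' u ζ| ≤ M') :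
    HasDerivAt (fun u => ∫ ζ, f u ζ * gaussianPDFReal u v ζ)
      (∫ ζ, ((ζ - u₀) / v * f u₀ ζ + f' u₀ ζ) * gaussianPDFReal u₀ v ζ) u₀ := by
  have hu₀ : u₀ ∈ Metric.ball u₀ 1 := Metric.mem_ball_self one_pos
  have hM : 0 ≤ M := (abs_nonneg _).trans (hfM u₀ hu₀ 0)
  have hM' : 0 ≤ M' := (abs_nonneg _).trans (hf'M u₀ hu₀ 0)
  have hv' : (0 : ℝ) < v := by positivity
  set K := (√(2 * π * v))⁻¹ * rexp (2 * (v : ℝ))⁻¹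
  refine (hasDerivAt_integral_of_dominated_loc_of_deriv_le
    (F' := fun u ζ => ((ζ - u) / v * f u ζ + f' u ζ) * gaussianPDFReal u v ζ)
    (bound := fun ζ =>
      K * ((M / v * |ζ - u₀| + (M / v + M')) * rexp (-(4 * (v : ℝ))⁻¹ * (ζ - u₀) ^ 2)))
    (Metric.ball_mem_nhds u₀ one_pos)
    (Filter.Eventually.of_forall fun u =>
      (hf_meas u).mul (measurable_gaussianPDFReal u v).aestronglyMeasurable)
    ((integrable_gaussianPDFReal u₀ v).bdd_mul (hf_meas u₀)
      (Filter.Eventually.of_forall fun ζ => hfM u₀ hu₀ ζ))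
    ((((measurable_id.sub_const u₀).div_const _).aestronglyMeasurable.mul (hf_meas u₀)).add
      hf'_meas |>.mul (measurable_gaussianPDFReal u₀ v).aestronglyMeasurable)
    (Filter.Eventually.of_forall fun ζ u hu => ?_)
    ((integrable_affine_abs_mul_exp_neg_mul_sq (by positivity) _ _ u₀).const_mul K)
    (Filter.Eventually.of_forall fun ζ u hu =>
      ((hf ζ u hu).mul (hasDerivAt_gaussianPDFReal_mean v ζ u)).congr_deriv (by ring))).2
  have hu1 : |u - u₀| ≤ 1 := (Metric.mem_ball.1 hu).le
  have hp := gaussianPDFReal_le_of_abs_sub_le v hu1 ζ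
  have hp0 := gaussianPDFReal_nonneg u v ζ
  have hζ : |ζ - u| ≤ |ζ - u₀| + 1 := by
    have := abs_sub_le ζ u₀ u
    rw [abs_sub_comm u₀ u] at this
    linarith
  have hcoef : |(ζ - u) / v * f u ζ + f' u ζ| ≤ M / v * |ζ - u₀| + (M / v + M') := by
    calc |(ζ - u) / v * f u ζ + f' u ζ| ≤ |ζ - u| / v * |f u ζ| + |f' u ζ| := by
          rw [← abs_of_pos hv', ← abs_div, abs_of_pos hv', ← abs_mul]; exact abs_add_le _ _
      _ ≤ (|ζ - u₀| + 1) / v * M + M' := by gcongr; exacts [hfM u hu ζ, hf'M u hu ζ]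
      _ = M / v * |ζ - u₀| + (M / v + M') := by ring
  rw [Real.norm_eq_abs, abs_mul, abs_of_nonneg hp0]
  calc |(ζ - u) / v * f u ζ + f' u ζ| * gaussianPDFReal u v ζ
      ≤ (M / v * |ζ - u₀| + (M / v + M')) * (K * rexp (-(4 * (v : ℝ))⁻¹ * (ζ - u₀) ^ 2)) :=
        mul_le_mul hcoef hp hp0 (by positivity)
    _ = _ := by ring

lemma integral_comp_const_add_gaussianReal (hv : v ≠ 0) (F : ℝ → ℝ) (u : ℝ) :
    ∫ w, F (u + w) ∂gaussianReal 0 v = ∫ ζ, F ζ * gaussianPDFReal u v ζ := by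
  have hmap : (gaussianReal 0 v).map (MeasurableEquiv.addLeft u) = gaussianReal u v := by
    simpa using gaussianReal_map_const_add (μ := 0) (v := v) u
  simp_rw [mul_comm (F _), ← smul_eq_mul, ← integral_gaussianReal_eq_integral_smul hv, ← hmap,
    integral_map_equiv]
  rfl

lemma abs_integral_mul_gaussianPDFReal_le (hv : v ≠ 0) {f f' : ℝ → ℝ} {M M' : ℝ}
    (hfM : ∀ ζ, |f ζ| ≤ M) (hf'M : ∀ ζ, |f' ζ| ≤ M') (u : ℝ) :
    |∫ ζ, ((ζ - u) / v * f ζ + f' ζ) * gaussianPDFReal u v ζ|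
      ≤ M / v * ∫ w, |w| ∂gaussianReal 0 v + M' := by
  have hv' : (0 : ℝ) < v := by positivity
  have hdev : Integrable (fun ζ => |ζ - u| * gaussianPDFReal u v ζ) := by
    refine ((integrable_affine_abs_mul_exp_neg_mul_sq (b := (4 * (v : ℝ))⁻¹) (by positivity)
      1 0 u).const_mul
      ((√(2 * π * v))⁻¹ * rexp (2 * (v : ℝ))⁻¹)).mono'
      ((measurable_id.sub_const u).abs.mul (measurable_gaussianPDFReal u v)).aestronglyMeasurable
      (Filter.Eventually.of_forall fun ζ => ?_)
    rw [Real.norm_eq_abs, abs_mul, abs_abs, abs_of_nonneg (gaussianPDFReal_nonneg u v ζ)]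
    calc |ζ - u| * gaussianPDFReal u v ζ
        ≤ |ζ - u| * ((√(2 * π * v))⁻¹ * rexp (2 * (v : ℝ))⁻¹
          * rexp (-(4 * (v : ℝ))⁻¹ * (ζ - u) ^ 2)) :=
          mul_le_mul_of_nonneg_left (gaussianPDFReal_le_of_abs_sub_le v (by simp) ζ) (abs_nonneg _)
      _ = _ := by ring
  have hmean : ∫ ζ, |ζ - u| * gaussianPDFReal u v ζ = ∫ w, |w| ∂gaussianReal 0 v := by
    simpa using (integral_comp_const_add_gaussianReal hv (fun ζ => |ζ - u|) u).symm
  rw [← Real.norm_eq_abs]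
  calc ‖∫ ζ, ((ζ - u) / v * f ζ + f' ζ) * gaussianPDFReal u v ζ‖
      ≤ ∫ ζ, M / v * (|ζ - u| * gaussianPDFReal u v ζ) + M' * gaussianPDFReal u v ζ := by
        refine norm_integral_le_of_norm_le ((hdev.const_mul _).add
          ((integrable_gaussianPDFReal u v).const_mul _)) (Filter.Eventually.of_forall fun ζ => ?_)
        have hp := gaussianPDFReal_nonneg u v ζ
        rw [Real.norm_eq_abs, abs_mul, abs_of_nonneg hp]
        calc |(ζ - u) / v * f ζ + f' ζ| * gaussianPDFReal u v ζ
            ≤ (|ζ - u| / v * M + M') * gaussianPDFReal u v ζ := by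
              gcongr
              calc |(ζ - u) / v * f ζ + f' ζ| ≤ |ζ - u| / v * |f ζ| + |f' ζ| := by
                    rw [← abs_of_pos hv', ← abs_div, abs_of_pos hv', ← abs_mul]
                    exact abs_add_le _ _
                _ ≤ |ζ - u| / v * M + M' := by gcongr; exacts [hfM ζ, hf'M ζ]
          _ = _ := by ring
    _ = M / v * ∫ w, |w| ∂gaussianReal 0 v + M' := by
        rw [integral_add (hdev.const_mul _) ((integrable_gaussianPDFReal u v).const_mul _),
          integral_const_mul, integral_const_mul, hmean, integral_gaussianPDFReal_eq_one u hv,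
          mul_one]

theorem hasDerivAt_integral_comp_add_mul {α : Type*} [MeasurableSpace α] {μ : Measure α}
    [IsFiniteMeasure μ] {Φ Φ' : α → ℝ → ℝ} {g δ B : α → ℝ} {A Cδ : ℝ}
    (hΦ : Measurable (Function.uncurry Φ)) (hΦ' : Measurable (Function.uncurry Φ'))
    (hΦ_deriv : ∀ x u, HasDerivAt (Φ x) (Φ' x u) u)
    (hΦ'_le : ∀ x u, |Φ' x u| ≤ B x + A * u ^ 2) (hA : 0 ≤ A) (hB : Integrable B μ)
    (hg : Measurable g) (hg2 : Integrable (fun x => g x ^ 2) μ)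
    (hδ : Measurable δ) (hδC : ∀ x, |δ x| ≤ Cδ)
    (hΦg : Integrable (fun x => Φ x (g x)) μ) :
    HasDerivAt (fun t => ∫ x, Φ x (g x + t * δ x) ∂μ) (∫ x, δ x * Φ' x (g x) ∂μ) 0 := by
  have hpath : ∀ t, Measurable fun x => g x + t * δ x := fun t => hg.add (hδ.const_mul t)
  have h := hasDerivAt_integral_of_dominated_loc_of_deriv_le (μ := μ) (x₀ := 0)
    (F := fun t x => Φ x (g x + t * δ x)) (F' := fun t x => δ x * Φ' x (g x + t * δ x))
    (bound := fun x => Cδ * (B x + A * (2 * g x ^ 2 + 2 * Cδ ^ 2)))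
    (Metric.ball_mem_nhds 0 one_pos)
    (Filter.Eventually.of_forall fun t =>
      (hΦ.comp (measurable_id.prodMk (hpath t))).aestronglyMeasurable)
    (by simpa using hΦg)
    (hδ.mul (hΦ'.comp (measurable_id.prodMk (hpath 0)))).aestronglyMeasurable
    (Filter.Eventually.of_forall fun x t ht => ?_)
    ((hB.add (((hg2.const_mul 2).add (integrable_const _)).const_mul A)).const_mul Cδ)
    (Filter.Eventually.of_forall fun x t _ =>
      ((hΦ_deriv x _).comp t (((hasDerivAt_id t).mul_const (δ x)).const_add (g x))).congr_deriv
        (by simp [mul_comm]))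
  · simpa using h.2
  · have hCδ : 0 ≤ Cδ := (abs_nonneg _).trans (hδC x)
    have ht : |t| ≤ 1 := by simpa using (Metric.mem_ball.1 ht).le
    have hpert : |t * δ x| ≤ Cδ := by
      rw [abs_mul]; nlinarith [abs_nonneg t, abs_nonneg (δ x), hδC x]
    have hsq : (g x + t * δ x) ^ 2 ≤ 2 * g x ^ 2 + 2 * Cδ ^ 2 := by
      nlinarith [add_sq_le (a := g x) (b := t * δ x),
        sq_le_sq' (abs_le.1 hpert).1 (abs_le.1 hpert).2]
    have hΦ'x := hΦ'_le x (g x + t * δ x)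
    rw [Real.norm_eq_abs, abs_mul]
    calc |δ x| * |Φ' x (g x + t * δ x)| ≤ Cδ * (B x + A * (g x + t * δ x) ^ 2) :=
          mul_le_mul (hδC x) hΦ'x (abs_nonneg _) hCδ
      _ ≤ Cδ * (B x + A * (2 * g x ^ 2 + 2 * Cδ ^ 2)) := by gcongr

-- `E[(u - γ₂ (u + V))²]` for `V ∼ N(0, v)`, written against the density of `u + V`.
noncomputable def secondStageCost (γ₂ : ℝ → ℝ) (v : ℝ≥0) (u : ℝ) : ℝ :=
  ∫ ζ, (u - γ₂ ζ) ^ 2 * gaussianPDFReal u v ζ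

noncomputable def secondStageCostDeriv (γ₂ : ℝ → ℝ) (v : ℝ≥0) (u : ℝ) : ℝ :=
  ∫ ζ, ((ζ - u) / v * (u - γ₂ ζ) ^ 2 + 2 * (u - γ₂ ζ)) * gaussianPDFReal u v ζ

section SecondStage

variable {γ₂ : ℝ → ℝ} {C : ℝ}

lemma abs_sub_apply_le (hC : ∀ y, |γ₂ y| ≤ C) (u ζ : ℝ) : |u - γ₂ ζ| ≤ |u| + C :=
  (abs_sub _ _).trans (by gcongr; exact hC ζ)

lemma sq_sub_apply_le (hC : ∀ y, |γ₂ y| ≤ C) (u ζ : ℝ) : (u - γ₂ ζ) ^ 2 ≤ (|u| + C) ^ 2 :=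
  sq_le_sq' (abs_le.1 (abs_sub_apply_le hC u ζ)).1 (abs_le.1 (abs_sub_apply_le hC u ζ)).2

lemma integral_add_sq_sub_comp_add_gaussianReal (hv : v ≠ 0) (hγ₂ : Measurable γ₂)
    (hC : ∀ y, |γ₂ y| ≤ C) (a u : ℝ) :
    ∫ w, (a + (u - γ₂ (u + w)) ^ 2) ∂gaussianReal 0 v = a + secondStageCost γ₂ v u := by
  have hint : Integrable (fun w => (u - γ₂ (u + w)) ^ 2) (gaussianReal 0 v) :=
    (integrable_const ((|u| + C) ^ 2)).mono'
      ((measurable_const.sub (hγ₂.comp (measurable_const_add u))).pow_const 2).aestronglyMeasurable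
      (Filter.Eventually.of_forall fun w => by
        rw [Real.norm_eq_abs, abs_of_nonneg (sq_nonneg _)]; exact sq_sub_apply_le hC u _)
  rw [integral_add (integrable_const a) hint, integral_const, probReal_univ, one_smul]
  exact congrArg (a + ·) (integral_comp_const_add_gaussianReal hv (fun ζ => (u - γ₂ ζ) ^ 2) u)

lemma hasDerivAt_secondStageCost (hv : v ≠ 0) (hγ₂ : Measurable γ₂) (hC : ∀ y, |γ₂ y| ≤ C)
    (u₀ : ℝ) : HasDerivAt (secondStageCost γ₂ v) (secondStageCostDeriv γ₂ v u₀) u₀ := by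
  have hball : ∀ u ∈ Metric.ball u₀ 1, |u| + C ≤ |u₀| + 1 + C := fun u hu => by
    have := abs_sub_abs_le_abs_sub u u₀
    have := (Metric.mem_ball.1 hu).le
    rw [Real.dist_eq] at this
    linarith
  refine hasDerivAt_integral_mul_gaussianPDFReal hv (M := (|u₀| + 1 + C) ^ 2)
    (M' := 2 * (|u₀| + 1 + C))
    (fun u => ((measurable_const.sub hγ₂).pow_const 2).aestronglyMeasurable)
    ((measurable_const.sub hγ₂).const_mul 2).aestronglyMeasurable
    (fun ζ u _ => by simpa using ((hasDerivAt_id u).sub_const (γ₂ ζ)).fun_pow 2)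
    (fun u hu ζ => ?_) (fun u hu ζ => ?_)
  · rw [abs_of_nonneg (sq_nonneg _)]
    exact (sq_sub_apply_le hC u ζ).trans
      (pow_le_pow_left₀ ((abs_nonneg _).trans (abs_sub_apply_le hC u ζ)) (hball u hu) 2)
  · rw [abs_mul, abs_two]
    exact mul_le_mul_of_nonneg_left ((abs_sub_apply_le hC u ζ).trans (hball u hu)) zero_le_two

lemma continuous_secondStageCost (hv : v ≠ 0) (hγ₂ : Measurable γ₂) (hC : ∀ y, |γ₂ y| ≤ C) :
    Continuous (secondStageCost γ₂ v) :=
  continuous_iff_continuousAt.2 fun u => (hasDerivAt_secondStageCost hv hγ₂ hC u).continuousAt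

lemma measurable_secondStageCostDeriv (hγ₂ : Measurable γ₂) :
    Measurable (secondStageCostDeriv γ₂ v) := by
  have hdiff : Measurable fun p : ℝ × ℝ => p.1 - γ₂ p.2 :=
    measurable_fst.sub (hγ₂.comp measurable_snd)
  have hjoint : StronglyMeasurable fun p : ℝ × ℝ =>
      ((p.2 - p.1) / v * (p.1 - γ₂ p.2) ^ 2 + 2 * (p.1 - γ₂ p.2)) * gaussianPDFReal p.1 v p.2 :=
    (((((measurable_snd.sub measurable_fst).div_const _).mul (hdiff.pow_const 2)).add
      (hdiff.const_mul 2)).mul (by fun_prop)).stronglyMeasurable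
  exact hjoint.integral_prod_right'.measurable

lemma abs_secondStageCost_le (hv : v ≠ 0) (hC : ∀ y, |γ₂ y| ≤ C) (u : ℝ) :
    |secondStageCost γ₂ v u| ≤ 2 * u ^ 2 + 2 * C ^ 2 := by
  have h : ‖secondStageCost γ₂ v u‖ ≤ ∫ ζ, (|u| + C) ^ 2 * gaussianPDFReal u v ζ :=
    norm_integral_le_of_norm_le ((integrable_gaussianPDFReal u v).const_mul ((|u| + C) ^ 2))
      (Filter.Eventually.of_forall fun ζ => ?_)
  · rw [integral_const_mul, integral_gaussianPDFReal_eq_one u hv, mul_one] at h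
    calc |secondStageCost γ₂ v u| ≤ (|u| + C) ^ 2 := h
      _ ≤ 2 * (|u| ^ 2 + C ^ 2) := add_sq_le
      _ = 2 * u ^ 2 + 2 * C ^ 2 := by rw [sq_abs]; ring
  · rw [Real.norm_eq_abs, abs_mul, abs_of_nonneg (sq_nonneg _),
      abs_of_nonneg (gaussianPDFReal_nonneg u v ζ)]
    exact mul_le_mul_of_nonneg_right (sq_sub_apply_le hC u ζ) (gaussianPDFReal_nonneg u v ζ)

lemma exists_abs_secondStageCostDeriv_le (hv : v ≠ 0) (hC : ∀ y, |γ₂ y| ≤ C) :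
    ∃ a b, 0 ≤ b ∧ ∀ u, |secondStageCostDeriv γ₂ v u| ≤ a + b * u ^ 2 := by
  set I := ∫ w, |w| ∂gaussianReal 0 v
  have hI : 0 ≤ I / v := div_nonneg (integral_nonneg fun w => abs_nonneg w) v.coe_nonneg
  refine ⟨2 * C ^ 2 * (I / v) + 2 * (1 + C), 2 * (I / v) + 2, by positivity, fun u => ?_⟩
  have h : |secondStageCostDeriv γ₂ v u| ≤ (|u| + C) ^ 2 / v * I + 2 * (|u| + C) :=
    abs_integral_mul_gaussianPDFReal_le hv (f := fun ζ => (u - γ₂ ζ) ^ 2)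
    (f' := fun ζ => 2 * (u - γ₂ ζ))
    (fun ζ => by rw [abs_of_nonneg (sq_nonneg _)]; exact sq_sub_apply_le hC u ζ)
    (fun ζ => by
      rw [abs_mul, abs_two]
      exact mul_le_mul_of_nonneg_left (abs_sub_apply_le hC u ζ) zero_le_two) u
  have hsq : (|u| + C) ^ 2 ≤ 2 * u ^ 2 + 2 * C ^ 2 := by
    nlinarith [add_sq_le (a := |u|) (b := C), sq_abs u]
  have habs : 2 * |u| ≤ 1 + u ^ 2 := by nlinarith [sq_nonneg (|u| - 1), sq_abs u]
  calc |secondStageCostDeriv γ₂ v u| ≤ (|u| + C) ^ 2 * (I / v) + 2 * (|u| + C) :=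
        h.trans_eq (by ring)
    _ ≤ (2 * u ^ 2 + 2 * C ^ 2) * (I / v) + 2 * (1 + C) + 2 * u ^ 2 := by
        nlinarith [mul_le_mul_of_nonneg_right hsq hI]
    _ = _ := by ring

end SecondStage

-- The expected payoff given `x₀ = x` and `x₁ = u`.
noncomputable def conditionalCost (k : ℝ) (γ₂ : ℝ → ℝ) (v : ℝ≥0) (x u : ℝ) : ℝ :=
  k ^ 2 * (u - x) ^ 2 + secondStageCost γ₂ v u

noncomputable def conditionalCostDeriv (k : ℝ) (γ₂ : ℝ → ℝ) (v : ℝ≥0) (x u : ℝ) : ℝ :=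
  2 * k ^ 2 * (u - x) + secondStageCostDeriv γ₂ v u

section Cost

variable (k : ℝ) {γ₂ : ℝ → ℝ} {C : ℝ}

lemma measurable_uncurry_conditionalCost (hv : v ≠ 0) (hγ₂ : Measurable γ₂)
    (hC : ∀ y, |γ₂ y| ≤ C) : Measurable (Function.uncurry (conditionalCost k γ₂ v)) :=
  ((measurable_snd.sub measurable_fst).pow_const 2).const_mul _ |>.add
    ((continuous_secondStageCost hv hγ₂ hC).measurable.comp measurable_snd)

lemma measurable_uncurry_conditionalCostDeriv (hγ₂ : Measurable γ₂) :
    Measurable (Function.uncurry (conditionalCostDeriv k γ₂ v)) :=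
  ((measurable_snd.sub measurable_fst).const_mul _).add
    ((measurable_secondStageCostDeriv hγ₂).comp measurable_snd)

lemma hasDerivAt_conditionalCost (hv : v ≠ 0) (hγ₂ : Measurable γ₂) (hC : ∀ y, |γ₂ y| ≤ C)
    (x u : ℝ) : HasDerivAt (conditionalCost k γ₂ v x) (conditionalCostDeriv k γ₂ v x u) u :=
  ((((hasDerivAt_id u).sub_const x).fun_pow 2).const_mul (k ^ 2)).add
    (hasDerivAt_secondStageCost hv hγ₂ hC u) |>.congr_deriv (by simp [conditionalCostDeriv]; ring)

lemma exists_abs_conditionalCostDeriv_le (hv : v ≠ 0) (hC : ∀ y, |γ₂ y| ≤ C) :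
    ∃ a b, 0 ≤ b ∧ ∀ x u, |conditionalCostDeriv k γ₂ v x u| ≤ a + b * x ^ 2 + b * u ^ 2 := by
  obtain ⟨a, b, hb, hab⟩ := exists_abs_secondStageCostDeriv_le hv hC
  refine ⟨2 * k ^ 2 + a, k ^ 2 + b, by positivity, fun x u => ?_⟩
  have hux : 2 * |u - x| ≤ 2 + u ^ 2 + x ^ 2 := by
    nlinarith [abs_sub u x, two_mul_le_add_sq 1 |u|, two_mul_le_add_sq 1 |x|, sq_abs u, sq_abs x]
  calc |2 * k ^ 2 * (u - x) + secondStageCostDeriv γ₂ v u|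
      ≤ k ^ 2 * (2 * |u - x|) + (a + b * u ^ 2) := by
        refine (abs_add_le _ _).trans (add_le_add (le_of_eq ?_) (hab u))
        rw [abs_mul, abs_of_nonneg (by positivity)]; ring
    _ ≤ k ^ 2 * (2 + u ^ 2 + x ^ 2) + (a + b * u ^ 2) := by gcongr
    _ ≤ 2 * k ^ 2 + a + (k ^ 2 + b) * x ^ 2 + (k ^ 2 + b) * u ^ 2 := by
        nlinarith [mul_nonneg hb (sq_nonneg x)]

lemma integrable_conditionalCost_comp (hv : v ≠ 0) (hγ₂ : Measurable γ₂) (hC : ∀ y, |γ₂ y| ≤ C)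
    {μ : Measure ℝ} [IsFiniteMeasure μ] (hμ2 : Integrable (fun x => x ^ 2) μ) {g : ℝ → ℝ}
    (hg : Measurable g) (hg2 : Integrable (fun x => g x ^ 2) μ) :
    Integrable (fun x => conditionalCost k γ₂ v x (g x)) μ := by
  refine (((hg2.add hμ2).const_mul (2 * k ^ 2)).add ((hg2.const_mul 2).add
    (integrable_const (2 * C ^ 2)))).mono'
    ((measurable_uncurry_conditionalCost k hv hγ₂ hC).comp
      (measurable_id.prodMk hg)).aestronglyMeasurable (Filter.Eventually.of_forall fun x => ?_)
  have hsq : (g x - x) ^ 2 ≤ 2 * (g x ^ 2 + x ^ 2) := by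
    nlinarith [add_sq_le (a := g x) (b := -x)]
  have hcost := abs_secondStageCost_le hv hC (g x)
  have hquad := mul_le_mul_of_nonneg_left hsq (sq_nonneg k)
  rw [Real.norm_eq_abs]
  refine (abs_add_le _ _).trans ?_
  rw [abs_of_nonneg (by positivity)]
  simp only [Pi.add_apply]
  linarith

end Cost

end Witsenhausen

open Witsenhausen

/-- Gâteaux derivative of the Witsenhausen payoff in the first-stage strategy:
`J(t)`, the payoff of the perturbed strategy `ḡ + tδ` with `γ₂` fixed, is differentiable
at `t = 0` with derivative `∫ δ(x) D(x) dμ(x)`, where `D` involves an integral against the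
Gaussian density `φ_σ(ζ − ḡ(x))` with respect to Lebesgue measure. -/
theorem stmt_13 (σ : ℝ) (hσ : 0 < σ) (k : ℝ) (μ : Measure ℝ) [IsProbabilityMeasure μ]
    (hμ2 : Integrable (fun x => x ^ 2) μ)
    (gb : ℝ → ℝ) (hgb : Measurable gb) (hgb2 : Integrable (fun x => gb x ^ 2) μ)
    (γ₂ δ : ℝ → ℝ) (hγ₂ : Measurable γ₂) (hγ₂b : ∃ C, ∀ y, |γ₂ y| ≤ C)
    (hδ : Measurable δ) (hδb : ∃ C, ∀ x, |δ x| ≤ C)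
    (φ : ℝ → ℝ)
    (hφ : ∀ z, φ z = (1 / Real.sqrt (2 * Real.pi * σ ^ 2)) * Real.exp (-z ^ 2 / (2 * σ ^ 2)))
    (J : ℝ → ℝ)
    (hJ : ∀ t, J t = ∫ x, ∫ v, (k ^ 2 * (gb x + t * δ x - x) ^ 2
        + (gb x + t * δ x - γ₂ (gb x + t * δ x + v)) ^ 2)
        ∂(gaussianReal 0 ⟨σ ^ 2, sq_nonneg σ⟩) ∂μ)
    (D : ℝ → ℝ)
    (hD : ∀ x, D x = 2 * k ^ 2 * (gb x - x)
        + ∫ ζ, (((ζ - gb x) / σ ^ 2) * (gb x - γ₂ ζ) ^ 2 + 2 * (gb x - γ₂ ζ)) * φ (ζ - gb x)) :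
    HasDerivAt J (∫ x, δ x * D x ∂μ) 0 := by
  obtain ⟨C, hC⟩ := hγ₂b
  obtain ⟨Cδ, hCδ⟩ := hδb
  set v : ℝ≥0 := ⟨σ ^ 2, sq_nonneg σ⟩
  have hv : v ≠ 0 := by rw [ne_eq, ← NNReal.coe_eq_zero]; exact (pow_pos hσ 2).ne'
  have hJ' : J = fun t => ∫ x, conditionalCost k γ₂ v x (gb x + t * δ x) ∂μ :=
    funext fun t => by simp_rw [hJ, integral_add_sq_sub_comp_add_gaussianReal hv hγ₂ hC]; rfl
  have hD' : D = fun x => conditionalCostDeriv k γ₂ v x (gb x) :=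
    funext fun x => by simp only [hD, hφ, one_div]; rfl
  obtain ⟨a, b, hb, hab⟩ := exists_abs_conditionalCostDeriv_le k hv hC
  rw [hJ', hD']
  exact hasDerivAt_integral_comp_add_mul (B := fun x => a + b * x ^ 2)
    (measurable_uncurry_conditionalCost k hv hγ₂ hC)
    (measurable_uncurry_conditionalCostDeriv k hγ₂) (hasDerivAt_conditionalCost k hv hγ₂ hC)
    hab hb ((integrable_const a).add (hμ2.const_mul b))
    hgb hgb2 hδ hCδ (integrable_conditionalCost_comp k hv hγ₂ hC hμ2 hgb hgb2)
end

section
/- Let σ > 0 and k ≠ 0, let μ be a probability measure on ℝ with ∫ x² dμ(x) < ∞, let ḡ : ℝ → ℝ be Borel measurable with ∫ ḡ(x)² dμ(x) < ∞, and let γ₂ : ℝ → ℝ be bounded Borel measurable. Write φ_σ(z) := (1/√(2πσ²)) exp(−z²/(2σ²)) and γ_σ := N(0, σ²). Suppose ḡ minimizes the payoff among bounded perturbations with γ₂ fixed: for every bounded Borel measurable δ : ℝ → ℝ and every t ∈ ℝ, ∫∫ [k²·(ḡ(x) + t·δ(x) − x)² + (ḡ(x) + t·δ(x) − γ₂(ḡ(x)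 + t·δ(x) + v))²] dγ_σ(v) dμ(x) ≥ ∫∫ [k²·(ḡ(x) − x)² + (ḡ(x) − γ₂(ḡ(x) + v))²] dγ_σ(v) dμ(x). Then for μ-almost every x, ḡ(x) = x − (1/k²) ∫_ℝ [((ζ − ḡ(x))/(2σ²))·(ḡ(x) − γ₂(ζ))² + (ḡ(x) − γ₂(ζ))]·φ_σ(ζ − ḡ(x)) dζ, the integral being with respect to Lebesgue measure. -/
/-!
The first-stage cost is `J(g) = ∫ [k²(g x - x)² + Φ(g x)] dμ` with `Φ(u) = E(u - γ₂(u + V))²`,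
`V ∼ N(0, σ²)`. Writing `Φ(u) = ∫ (u - γ₂ ζ)² φ_σ(ζ - u) dζ` moves all dependence on `u` into
the Gaussian density, so `Φ` is differentiable although `γ₂` is only measurable, with
`Φ'(u) = ∫ [2(u - γ₂ ζ) + (ζ - u)/σ² (u - γ₂ ζ)²] φ_σ(ζ - u) dζ = O(1 + u²)`. Hence
`t ↦ J(ḡ + tδ)` is differentiable at `0` with derivative `∫ [2k²(ḡ x - x) + Φ'(ḡ x)] δ x dμ`,
which vanishes by minimality. Taking `δ = 1_s` for every measurable `s` gives
`2k²(ḡ - x) + Φ'(ḡ) = 0` almost everywhere, which is the claimed equation.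
-/

open MeasureTheory ProbabilityTheory Real
open scoped NNReal

lemma hasDerivAt_gaussianPDFReal_mean (v : ℝ≥0) (x m : ℝ) :
    HasDerivAt (fun m => gaussianPDFReal m v x) ((x - m) / v * gaussianPDFReal m v x) m := by
  have hexponent : HasDerivAt (fun m => -(x - m) ^ 2 / (2 * v)) ((x - m) / v) m := by
    refine (((hasDerivAt_id m).const_sub x).fun_pow 2).fun_neg.div_const (2 * (v : ℝ))
      |>.congr_deriv ?_
    rcases eq_or_ne (v : ℝ) 0 with hv | hv
    · simp [hv]
    · field_simp
      simp
  exact (hexponent.exp.const_mul (√(2 * π * v))⁻¹).congr_deriv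
    (by simp only [gaussianPDFReal]; ring)

lemma integrable_one_add_abs_mul_exp_neg_mul_sq {b : ℝ} (hb : 0 < b) :
    Integrable fun z : ℝ => (1 + |z|) * exp (-b * z ^ 2) := by
  refine ((integrable_exp_neg_mul_sq hb).add (integrable_mul_exp_neg_mul_sq hb).abs).congr
    (.of_forall fun z => ?_)
  simp only [Pi.add_apply, abs_mul, abs_exp]
  ring

/-- The envelope is a multiple of `(1 + |ζ - u₀|)` times a Gaussian of variance `2v` centred
at `u₀`, since `(ζ - u₀)² ≤ 2(ζ - u)² + 2`. -/
lemma exists_integrable_gaussianPDFReal_envelope {v : ℝ≥0} (hv : v ≠ 0) (u₀ : ℝ) :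
    ∃ E : ℝ → ℝ, Integrable E ∧
      ∀ u, |u - u₀| ≤ 1 → ∀ ζ, (1 + |ζ - u|) * gaussianPDFReal u v ζ ≤ E ζ := by
  set c := 2 * (√(2 * π * v))⁻¹ * exp (1 / (2 * v))
  refine ⟨fun ζ => c * ((1 + |ζ - u₀|) * exp (-(1 / (4 * v)) * (ζ - u₀) ^ 2)),
    ((integrable_one_add_abs_mul_exp_neg_mul_sq (by positivity)).comp_sub_right u₀).const_mul c,
    fun u hu ζ => ?_⟩
  have hlin : 1 + |ζ - u| ≤ 2 * (1 + |ζ - u₀|) := by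
    linarith [abs_sub_le ζ u₀ u, abs_sub_comm u u₀, abs_nonneg (ζ - u₀)]
  have hexp : -(ζ - u) ^ 2 / (2 * v) ≤ 1 / (2 * v) + -(1 / (4 * v)) * (ζ - u₀) ^ 2 := by
    have hsq : (ζ - u₀) ^ 2 ≤ 2 * (ζ - u) ^ 2 + 2 := by
      nlinarith [abs_le.mp hu, sq_nonneg (ζ - u - (u - u₀))]
    rw [← sub_nonneg]
    have : 1 / (2 * v) + -(1 / (4 * v)) * (ζ - u₀) ^ 2 - -(ζ - u) ^ 2 / (2 * v)
        = (2 * (ζ - u) ^ 2 + 2 - (ζ - u₀) ^ 2) / (4 * v) := by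
      field_simp; ring
    rw [this]
    exact div_nonneg (by linarith) (by positivity)
  have hpdf : gaussianPDFReal u v ζ
      ≤ (√(2 * π * v))⁻¹ * exp (1 / (2 * v)) * exp (-(1 / (4 * v)) * (ζ - u₀) ^ 2) := by
    rw [gaussianPDFReal, mul_assoc _ (exp _), ← exp_add]
    gcongr
  calc (1 + |ζ - u|) * gaussianPDFReal u v ζ
      ≤ 2 * (1 + |ζ - u₀|) *
          ((√(2 * π * v))⁻¹ * exp (1 / (2 * v)) * exp (-(1 / (4 * v)) * (ζ - u₀) ^ 2)) :=
        mul_le_mul hlin hpdf (gaussianPDFReal_nonneg _ _ _) (by positivity)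
    _ = _ := by ring

lemma integral_comp_const_add_gaussianReal {v : ℝ≥0} (hv : v ≠ 0) (f : ℝ → ℝ) (u : ℝ) :
    ∫ w, f (u + w) ∂gaussianReal 0 v = ∫ ζ, gaussianPDFReal u v ζ * f ζ := by
  rw [← (measurableEmbedding_addLeft u).integral_map, gaussianReal_map_const_add, zero_add,
    integral_gaussianReal_eq_integral_smul hv]
  rfl

lemma integral_one_add_abs_sub_mul_gaussianPDFReal (v : ℝ≥0) (u : ℝ) :
    ∫ ζ, (1 + |ζ - u|) * gaussianPDFReal u v ζ = ∫ z, (1 + |z|) * gaussianPDFReal 0 v z := by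
  have hshift : ∀ ζ, gaussianPDFReal u v ζ = gaussianPDFReal 0 v (ζ - u) := fun ζ => by
    rw [gaussianPDFReal_sub, zero_add]
  simp_rw [hshift]
  exact integral_sub_right_eq_self (fun z => (1 + |z|) * gaussianPDFReal 0 v z) u

/-- `E(u - γ(u + V))²` for `V ∼ N(0, v)`: the second-stage cost when the first stage plays `u`. -/
noncomputable def secondStageCost (v : ℝ≥0) (γ : ℝ → ℝ) (u : ℝ) : ℝ :=
  ∫ w, (u - γ (u + w)) ^ 2 ∂gaussianReal 0 v

noncomputable def secondStageCostDeriv (v : ℝ≥0) (γ : ℝ → ℝ) (u : ℝ) : ℝ :=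
  ∫ ζ, gaussianPDFReal u v ζ * (2 * (u - γ ζ) + (ζ - u) / v * (u - γ ζ) ^ 2)

section SecondStageCost

variable {v : ℝ≥0} {γ : ℝ → ℝ} {C : ℝ}

lemma abs_sub_le_of_forall_abs_le (hC : ∀ y, |γ y| ≤ C) (u y : ℝ) : |u - γ y| ≤ |u| + C :=
  (abs_sub _ _).trans (by linarith [hC y])

lemma sq_sub_le_of_forall_abs_le (hC : ∀ y, |γ y| ≤ C) (u y : ℝ) : (u - γ y) ^ 2 ≤ (|u| + C) ^ 2 :=
  sq_le_sq' (by linarith [abs_le.mp (abs_sub_le_of_forall_abs_le hC u y)])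
    (abs_le.mp (abs_sub_le_of_forall_abs_le hC u y)).2

lemma abs_secondStageCost_le (hC : ∀ y, |γ y| ≤ C) (u : ℝ) :
    |secondStageCost v γ u| ≤ (|u| + C) ^ 2 := by
  rw [secondStageCost, ← Real.norm_eq_abs, ← mul_one ((|u| + C) ^ 2),
    ← probReal_univ (μ := gaussianReal 0 v)]
  refine norm_integral_le_of_norm_le_const (.of_forall fun w => ?_)
  rw [Real.norm_eq_abs, abs_sq]
  exact sq_sub_le_of_forall_abs_le hC u _

lemma secondStageCost_eq_integral (hv : v ≠ 0) (u : ℝ) :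
    secondStageCost v γ u = ∫ ζ, gaussianPDFReal u v ζ * (u - γ ζ) ^ 2 :=
  integral_comp_const_add_gaussianReal hv (fun ζ => (u - γ ζ) ^ 2) u

lemma abs_secondStageCostDeriv_integrand_le {u ζ R : ℝ} (hR : |u - γ ζ| ≤ R) :
    |gaussianPDFReal u v ζ * (2 * (u - γ ζ) + (ζ - u) / v * (u - γ ζ) ^ 2)|
      ≤ (2 * R + R ^ 2 / v) * ((1 + |ζ - u|) * gaussianPDFReal u v ζ) := by
  have hR0 : 0 ≤ R := (abs_nonneg _).trans hR
  have hsq : (u - γ ζ) ^ 2 ≤ R ^ 2 := sq_le_sq' (abs_le.mp hR).1 (abs_le.mp hR).2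
  have hfactor : |2 * (u - γ ζ) + (ζ - u) / v * (u - γ ζ) ^ 2|
      ≤ (2 * R + R ^ 2 / v) * (1 + |ζ - u|) := by
    calc |2 * (u - γ ζ) + (ζ - u) / v * (u - γ ζ) ^ 2|
        ≤ 2 * R + |ζ - u| / v * R ^ 2 := by
          refine (abs_add_le _ _).trans (add_le_add ?_ ?_)
          · rw [abs_mul, abs_two]; linarith
          · rw [abs_mul, abs_div, NNReal.abs_eq, abs_sq]
            gcongr
      _ ≤ (2 * R + R ^ 2 / v) * (1 + |ζ - u|) := by
          have : 0 ≤ 2 * R * |ζ - u| + R ^ 2 / v := by positivity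
          linarith [show (2 * R + R ^ 2 / v) * (1 + |ζ - u|)
            = 2 * R + |ζ - u| / v * R ^ 2 + (2 * R * |ζ - u| + R ^ 2 / v) by ring]
  rw [abs_mul, abs_of_nonneg (gaussianPDFReal_nonneg _ _ _)]
  calc gaussianPDFReal u v ζ * |2 * (u - γ ζ) + (ζ - u) / v * (u - γ ζ) ^ 2|
      ≤ gaussianPDFReal u v ζ * ((2 * R + R ^ 2 / v) * (1 + |ζ - u|)) :=
        mul_le_mul_of_nonneg_left hfactor (gaussianPDFReal_nonneg _ _ _)
    _ = _ := by ring

lemma hasDerivAt_secondStageCost (hv : v ≠ 0) (hγ : Measurable γ) (hC : ∀ y, |γ y| ≤ C)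
    (u₀ : ℝ) : HasDerivAt (secondStageCost v γ) (secondStageCostDeriv v γ u₀) u₀ := by
  obtain ⟨E, hE, hEbound⟩ := exists_integrable_gaussianPDFReal_envelope hv u₀
  set R := |u₀| + 1 + C
  have hR : ∀ u ∈ Metric.closedBall u₀ 1, ∀ ζ, |u - γ ζ| ≤ R := fun u hu ζ => by
    have := abs_sub_abs_le_abs_sub u u₀
    rw [Metric.mem_closedBall, Real.dist_eq] at hu
    linarith [abs_sub_le_of_forall_abs_le hC u ζ]
  have hcost : secondStageCost v γ = fun u => ∫ ζ, gaussianPDFReal u v ζ * (u - γ ζ) ^ 2 :=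
    funext (secondStageCost_eq_integral hv)
  rw [hcost]
  refine (hasDerivAt_integral_of_dominated_loc_of_deriv_le (bound := (2 * R + R ^ 2 / v) • E)
    (F := fun u ζ => gaussianPDFReal u v ζ * (u - γ ζ) ^ 2)
    (F' := fun u ζ => gaussianPDFReal u v ζ * (2 * (u - γ ζ) + (ζ - u) / v * (u - γ ζ) ^ 2))
    (Metric.closedBall_mem_nhds u₀ one_pos) (.of_forall fun u => by fun_prop) ?_ (by fun_prop)
    (.of_forall fun ζ u hu => ?_) (hE.const_mul _) (.of_forall fun ζ u _ => ?_)).2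
  · refine (hE.const_mul (R ^ 2)).mono' (by fun_prop) (.of_forall fun ζ => ?_)
    have hR₀ := hR u₀ (Metric.mem_closedBall_self zero_le_one) ζ
    rw [Real.norm_eq_abs, abs_mul, abs_sq, abs_of_nonneg (gaussianPDFReal_nonneg _ _ _), mul_comm]
    have hsq : (u₀ - γ ζ) ^ 2 ≤ R ^ 2 := sq_le_sq' (abs_le.mp hR₀).1 (abs_le.mp hR₀).2
    have hpdf : gaussianPDFReal u₀ v ζ ≤ E ζ :=
      (le_mul_of_one_le_left (gaussianPDFReal_nonneg _ _ _)
        (by linarith [abs_nonneg (ζ - u₀)])).trans (hEbound u₀ (by simp) ζ)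
    exact mul_le_mul hsq hpdf (gaussianPDFReal_nonneg _ _ _) (sq_nonneg _)
  · have hR0 : 0 ≤ R := (abs_nonneg _).trans (hR u hu ζ)
    rw [Real.norm_eq_abs, Pi.smul_apply, smul_eq_mul]
    refine (abs_secondStageCostDeriv_integrand_le (hR u hu ζ)).trans ?_
    gcongr
    exact hEbound u (by simpa [Real.dist_eq] using hu) ζ
  · have hsq : HasDerivAt (fun u => (u - γ ζ) ^ 2) (2 * (u - γ ζ)) u := by
      simpa using ((hasDerivAt_id u).sub_const (γ ζ)).fun_pow 2
    exact ((hasDerivAt_gaussianPDFReal_mean v ζ u).mul hsq).congr_deriv (by ring)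

lemma exists_abs_secondStageCostDeriv_le (hv : v ≠ 0) (hC : ∀ y, |γ y| ≤ C) :
    ∃ A, 0 ≤ A ∧ ∀ u, |secondStageCostDeriv v γ u| ≤ A * (1 + u ^ 2) := by
  set M := ∫ z, (1 + |z|) * gaussianPDFReal 0 v z
  have hM : 0 ≤ M := integral_nonneg fun z =>
    mul_nonneg (by positivity) (gaussianPDFReal_nonneg _ _ _)
  have hC0 : 0 ≤ C := (abs_nonneg _).trans (hC 0)
  refine ⟨3 * (2 + 1 / v) * (1 + C ^ 2) * M, by positivity, fun u => ?_⟩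
  set R := |u| + C
  obtain ⟨E, hE, hEbound⟩ := exists_integrable_gaussianPDFReal_envelope hv u
  have hint : Integrable fun ζ => (1 + |ζ - u|) * gaussianPDFReal u v ζ :=
    hE.mono' (by fun_prop) (.of_forall fun ζ => by
      rw [Real.norm_eq_abs,
        abs_of_nonneg (mul_nonneg (by positivity) (gaussianPDFReal_nonneg _ _ _))]
      exact hEbound u (by simp) ζ)
  have hderiv : |secondStageCostDeriv v γ u| ≤ (2 * R + R ^ 2 / v) * M := by
    rw [secondStageCostDeriv,
      show M = _ from (integral_one_add_abs_sub_mul_gaussianPDFReal v u).symm,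
      ← integral_const_mul, ← Real.norm_eq_abs]
    refine norm_integral_le_of_norm_le (hint.const_mul (2 * R + R ^ 2 / v)) (.of_forall fun ζ => ?_)
    exact abs_secondStageCostDeriv_integrand_le (abs_sub_le_of_forall_abs_le hC u ζ)
  have hL : R ^ 2 ≤ 3 * (1 + C ^ 2) * (1 + u ^ 2) := by
    nlinarith [sq_abs u, sq_nonneg (|u| - C), mul_nonneg (sq_nonneg C) (sq_nonneg u)]
  have hR2 : 2 * R ≤ 2 * 3 * (1 + C ^ 2) * (1 + u ^ 2) := by
    nlinarith [sq_nonneg (R - 1)]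
  calc |secondStageCostDeriv v γ u| ≤ (2 * R + R ^ 2 / v) * M := hderiv
    _ ≤ (2 * 3 * (1 + C ^ 2) * (1 + u ^ 2) + 3 * (1 + C ^ 2) * (1 + u ^ 2) / v) * M := by
        gcongr
    _ = _ := by ring

end SecondStageCost

section FirstVariation

variable {α : Type*} [MeasurableSpace α] {μ : Measure α} [IsFiniteMeasure μ]
  {G G' : α → ℝ → ℝ} {g b : α → ℝ} {A : ℝ}

lemma hasDerivAt_integral_add_mul (hG : Measurable (Function.uncurry G))
    (hG' : Measurable (Function.uncurry G')) (hderiv : ∀ x u, HasDerivAt (G x) (G' x u) u)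
    (hb : Integrable b μ) (hA : 0 ≤ A) (hG'le : ∀ x u, |G' x u| ≤ b x + A * u ^ 2)
    (hg : Measurable g) (hg2 : Integrable (fun x => g x ^ 2) μ)
    (hGg : Integrable (fun x => G x (g x)) μ) {δ : α → ℝ} (hδ : Measurable δ) {D : ℝ}
    (hδD : ∀ x, |δ x| ≤ D) :
    Integrable (fun x => G' x (g x) * δ x) μ ∧
      HasDerivAt (fun t => ∫ x, G x (g x + t * δ x) ∂μ) (∫ x, G' x (g x) * δ x ∂μ) 0 := by
  have hmeas : ∀ t, Measurable fun x => g x + t * δ x := fun t => by fun_prop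
  have hbound : ∀ x, ∀ t ∈ Metric.ball (0 : ℝ) 1,
      ‖G' x (g x + t * δ x) * δ x‖ ≤ (b x + A * (2 * g x ^ 2 + 2 * D ^ 2)) * D := fun x t ht => by
    have htδ : |t * δ x| ≤ D := by
      rw [abs_mul]
      exact (mul_le_of_le_one_left (abs_nonneg _)
        (by simpa using (mem_ball_zero_iff.mp ht).le)).trans (hδD x)
    have hsq : (g x + t * δ x) ^ 2 ≤ 2 * g x ^ 2 + 2 * D ^ 2 := by
      nlinarith [sq_nonneg (g x - t * δ x), sq_le_sq' (abs_le.mp htδ).1 (abs_le.mp htδ).2]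
    rw [Real.norm_eq_abs, abs_mul]
    exact mul_le_mul ((hG'le x _).trans (by gcongr)) (hδD x) (abs_nonneg _)
      ((abs_nonneg _).trans (hG'le x _) |>.trans (by gcongr))
  refine hasDerivAt_integral_of_dominated_loc_of_deriv_le (F := fun t x => G x (g x + t * δ x))
    (F' := fun t x => G' x (g x + t * δ x) * δ x) (Metric.ball_mem_nhds 0 one_pos)
    (.of_forall fun t => (hG.comp (measurable_id.prodMk (hmeas t))).aestronglyMeasurable)
    (by simpa using hGg)
    ((hG'.comp (measurable_id.prodMk (hmeas 0))).mul hδ).aestronglyMeasurable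
    (.of_forall hbound)
    ((hb.add (((hg2.const_mul 2).add (integrable_const _)).const_mul A)).mul_const D)
    (.of_forall fun x t _ => ?_) |>.imp (by simpa using ·) (by simpa using ·)
  have haffine : HasDerivAt (fun t => g x + t * δ x) (δ x) t := by
    simpa using ((hasDerivAt_id t).mul_const (δ x)).const_add (g x)
  exact (hderiv x _).comp t haffine

/-- Perturbing in the direction `δ = 1_s` shows that `∫ x in s, G' x (g x) ∂μ = 0` for all `s`. -/
lemma ae_eq_zero_of_forall_integral_le (hG : Measurable (Function.uncurry G))
    (hG' : Measurable (Function.uncurry G')) (hderiv : ∀ x u, HasDerivAt (G x) (G' x u) u)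
    (hb : Integrable b μ) (hA : 0 ≤ A) (hG'le : ∀ x u, |G' x u| ≤ b x + A * u ^ 2)
    (hg : Measurable g) (hg2 : Integrable (fun x => g x ^ 2) μ)
    (hGg : Integrable (fun x => G x (g x)) μ)
    (hmin : ∀ δ : α → ℝ, Measurable δ → (∃ D, ∀ x, |δ x| ≤ D) → ∀ t : ℝ,
      ∫ x, G x (g x) ∂μ ≤ ∫ x, G x (g x + t * δ x) ∂μ) :
    ∀ᵐ x ∂μ, G' x (g x) = 0 := by
  have hindicator : ∀ s, MeasurableSet s →
      Integrable (s.indicator fun x => G' x (g x)) μ ∧ ∫ x in s, G' x (g x) ∂μ = 0 := by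
    intro s hs
    have hδ : Measurable (s.indicator (1 : α → ℝ)) := measurable_const.indicator hs
    have hδD : ∀ x, |s.indicator (1 : α → ℝ) x| ≤ 1 := fun x => by
      by_cases hx : x ∈ s <;> simp [hx]
    obtain ⟨hint, hderivJ⟩ :=
      hasDerivAt_integral_add_mul hG hG' hderiv hb hA hG'le hg hg2 hGg hδ hδD
    have hmul : (fun x => G' x (g x) * s.indicator 1 x) = s.indicator fun x => G' x (g x) := by
      ext x
      by_cases hx : x ∈ s <;> simp [hx]
    have hlocalMin : IsLocalMin (fun t => ∫ x, G x (g x + t * s.indicator 1 x) ∂μ) 0 :=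
      .of_forall fun t => by simpa using hmin _ hδ ⟨1, hδD⟩ t
    rw [hmul] at hint hderivJ
    exact ⟨hint, (integral_indicator hs).symm.trans (hlocalMin.hasDerivAt_eq_zero hderivJ)⟩
  exact ae_eq_zero_of_forall_setIntegral_eq_of_sigmaFinite
    (fun s hs _ => (integrable_indicator_iff hs).1 (hindicator s hs).1)
    (fun s hs _ => (hindicator s hs).2)

end FirstVariation

lemma abs_le_one_add_sq (x : ℝ) : |x| ≤ 1 + x ^ 2 := by
  nlinarith [sq_abs x, sq_nonneg (|x| - 1)]

section FirstStage

variable {v : ℝ≥0} {γ : ℝ → ℝ} {C : ℝ}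

lemma integral_add_sq_sub_eq_add_secondStageCost (hγ : Measurable γ) (hC : ∀ y, |γ y| ≤ C)
    (a u : ℝ) :
    ∫ w, (a + (u - γ (u + w)) ^ 2) ∂gaussianReal 0 v = a + secondStageCost v γ u := by
  have hint : Integrable (fun w => (u - γ (u + w)) ^ 2) (gaussianReal 0 v) :=
    .of_bound (by fun_prop : Measurable fun w => (u - γ (u + w)) ^ 2).aestronglyMeasurable
      ((|u| + C) ^ 2) (.of_forall fun w => by
      rw [Real.norm_eq_abs, abs_sq]
      exact sq_sub_le_of_forall_abs_le hC u _)
  rw [integral_add (integrable_const a) hint, integral_const, probReal_univ, one_smul,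
    secondStageCost]

lemma ae_two_mul_sq_mul_sub_add_secondStageCostDeriv_eq_zero (hv : v ≠ 0) (hγ : Measurable γ)
    (hC : ∀ y, |γ y| ≤ C) {μ : Measure ℝ} [IsFiniteMeasure μ]
    (hμ2 : Integrable (fun x => x ^ 2) μ) {g : ℝ → ℝ} (hg : Measurable g)
    (hg2 : Integrable (fun x => g x ^ 2) μ) (k : ℝ)
    (hmin : ∀ δ : ℝ → ℝ, Measurable δ → (∃ D, ∀ x, |δ x| ≤ D) → ∀ t : ℝ,
      ∫ x, (k ^ 2 * (g x - x) ^ 2 + secondStageCost v γ (g x)) ∂μ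
        ≤ ∫ x, (k ^ 2 * (g x + t * δ x - x) ^ 2 + secondStageCost v γ (g x + t * δ x)) ∂μ) :
    ∀ᵐ x ∂μ, 2 * k ^ 2 * (g x - x) + secondStageCostDeriv v γ (g x) = 0 := by
  obtain ⟨A, hA, hderivLe⟩ := exists_abs_secondStageCostDeriv_le hv hC
  have hcost := hasDerivAt_secondStageCost hv hγ hC
  have hcostMeas : Measurable (secondStageCost v γ) :=
    (continuous_iff_continuousAt.2 fun u => (hcost u).continuousAt).measurable
  have hderivMeas : Measurable (secondStageCostDeriv v γ) := by
    rw [← funext fun u => (hcost u).deriv]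
    exact measurable_deriv _
  refine ae_eq_zero_of_forall_integral_le
    (G := fun x u => k ^ 2 * (u - x) ^ 2 + secondStageCost v γ u)
    (G' := fun x u => 2 * k ^ 2 * (u - x) + secondStageCostDeriv v γ u)
    (b := fun x => 2 * k ^ 2 * (2 + x ^ 2) + A) (A := 2 * k ^ 2 + A) (by fun_prop) (by fun_prop)
    (fun x u => ?_) ((((integrable_const _).add hμ2).const_mul _).add (integrable_const _))
    (by positivity) (fun x u => ?_) hg hg2 ?_ hmin
  · have hsq : HasDerivAt (fun u => (u - x) ^ 2) (2 * (u - x)) u := by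
      simpa using ((hasDerivAt_id u).sub_const x).fun_pow 2
    exact ((hsq.const_mul (k ^ 2)).add (hcost u)).congr_deriv (by ring)
  · have hdiff : |2 * k ^ 2 * (u - x)| ≤ 2 * k ^ 2 * ((1 + u ^ 2) + (1 + x ^ 2)) := by
      rw [abs_mul, abs_of_nonneg (by positivity)]
      gcongr
      exact (abs_sub _ _).trans (add_le_add (abs_le_one_add_sq u) (abs_le_one_add_sq x))
    linarith [abs_add_le (2 * k ^ 2 * (u - x)) (secondStageCostDeriv v γ u), hderivLe u]
  · refine Integrable.mono'
      (g := fun x => (2 * k ^ 2 + 2) * g x ^ 2 + 2 * k ^ 2 * x ^ 2 + 2 * C ^ 2)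
      (((hg2.const_mul _).add (hμ2.const_mul _)).add (integrable_const _)) (by fun_prop)
      (.of_forall fun x => ?_)
    have hcostLe := abs_secondStageCost_le (v := v) hC (g x)
    rw [Real.norm_eq_abs]
    refine (abs_add_le _ _).trans ?_
    rw [abs_of_nonneg (by positivity)]
    nlinarith [sq_abs (g x), sq_nonneg (|g x| - C), sq_nonneg (g x + x)]

end FirstStage

/-- First integral equation of the Witsenhausen counterexample: if `ḡ` minimizes the
payoff among bounded measurable perturbations (with `γ₂` fixed), then for `μ`-almost
every `x`,
`ḡ(x) = x − (1/k²) ∫ [((ζ−ḡ(x))/(2σ²))(ḡ(x)−γ₂(ζ))² + (ḡ(x)−γ₂(ζ))] φ_σ(ζ−ḡ(x)) dζ`. -/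
theorem stmt_14 (σ : ℝ) (hσ : 0 < σ) (k : ℝ) (hk : k ≠ 0)
    (μ : Measure ℝ) [IsProbabilityMeasure μ] (hμ2 : Integrable (fun x => x ^ 2) μ)
    (gb : ℝ → ℝ) (hgb : Measurable gb) (hgb2 : Integrable (fun x => gb x ^ 2) μ)
    (γ₂ : ℝ → ℝ) (hγ₂ : Measurable γ₂) (hγ₂b : ∃ C, ∀ y, |γ₂ y| ≤ C)
    (φ : ℝ → ℝ)
    (hφ : ∀ z, φ z = (1 / Real.sqrt (2 * Real.pi * σ ^ 2)) * Real.exp (-z ^ 2 / (2 * σ ^ 2)))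
    (hmin : ∀ δ : ℝ → ℝ, Measurable δ → (∃ C, ∀ x, |δ x| ≤ C) → ∀ t : ℝ,
      ∫ x, ∫ v, (k ^ 2 * (gb x - x) ^ 2 + (gb x - γ₂ (gb x + v)) ^ 2)
          ∂(gaussianReal 0 ⟨σ ^ 2, sq_nonneg σ⟩) ∂μ
        ≤ ∫ x, ∫ v, (k ^ 2 * (gb x + t * δ x - x) ^ 2
            + (gb x + t * δ x - γ₂ (gb x + t * δ x + v)) ^ 2)
          ∂(gaussianReal 0 ⟨σ ^ 2, sq_nonneg σ⟩) ∂μ) :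
    ∀ᵐ x ∂μ, gb x = x - (1 / k ^ 2) *
      ∫ ζ, (((ζ - gb x) / (2 * σ ^ 2)) * (gb x - γ₂ ζ) ^ 2 + (gb x - γ₂ ζ)) * φ (ζ - gb x) := by
  obtain ⟨C, hC⟩ := hγ₂b
  set v : ℝ≥0 := ⟨σ ^ 2, sq_nonneg σ⟩
  have hvσ : (v : ℝ) = σ ^ 2 := rfl
  have hv : v ≠ 0 := by
    rw [← NNReal.coe_ne_zero, hvσ]
    positivity
  simp only [integral_add_sq_sub_eq_add_secondStageCost hγ₂ hC] at hmin
  filter_upwards [ae_two_mul_sq_mul_sub_add_secondStageCostDeriv_eq_zero hv hγ₂ hC hμ2 hgb hgb2 k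
    hmin] with x hx
  set I := ∫ ζ, (((ζ - gb x) / (2 * σ ^ 2)) * (gb x - γ₂ ζ) ^ 2 + (gb x - γ₂ ζ)) * φ (ζ - gb x)
    with hI
  have hderiv : secondStageCostDeriv v γ₂ (gb x) = 2 * I := by
    rw [secondStageCostDeriv, hI, ← integral_const_mul]
    congr 1 with ζ
    rw [hφ, gaussianPDFReal, hvσ, one_div]
    field_simp
    ring
  rw [hderiv] at hx
  field_simp
  linarith
end
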